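/- arXiv:0704.1607 — 5 statements merged into one kernel-verified Lean document; each statement's English description precedes it below -/
import Mathlib

section
/- For all x, y, z ∈ ℝ one has Ω(x,y,z) = 0 if and only if at least one of the following holds modulo 2π: z = x, z = y, or y = h(x,z). -/
open MeasureTheory Real Set Filter
open scoped Topology ENNReal ComplexConjugate

noncomputable section

/-- The fundamental periodic cell `I = [0, 2π)`. -/
def II : Set ℝ := Set.Ico 0 (2 * π)

/-- Lebesgue measure restricted to `I`. -/
def muI : Measure ℝ := volume.restrict II

/-- The dispersion relation `ω(x) = |sin(x/2)|`. -/
def omg (x : ℝ) : ℝ := |Real.sin (x / 2)|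

/-- `Ω(x,y,z) = ω(x) + ω(y) − ω(z) − ω(x+y−z)`. -/
def Omg (x y z : ℝ) : ℝ := omg x + omg y - omg z - omg (x + y - z)

/-- The representative of `x` modulo `2π` lying in `[0, 2π)`. -/
def mod2pi (x : ℝ) : ℝ := x - 2 * π * (⌊x / (2 * π)⌋ : ℝ)

/-- `h` on the fundamental cell: `h(x,z) = (z−x)/2 + 2 arcsin( tan(|z−x|/4) cos((x+z)/4) )`. -/
def h0 (x z : ℝ) : ℝ :=
  (z - x) / 2 + 2 * Real.arcsin (Real.tan (|z - x| / 4) * Real.cos ((x + z) / 4))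

/-- The extension of `h` to all of `ℝ²`: `h(x,z) = h(x mod 2π, z mod 2π) − (x − (x mod 2π))`. -/
def hFPU (x z : ℝ) : ℝ := h0 (mod2pi x) (mod2pi z) - (x - mod2pi x)

/-- `F₊(x,y) = (cos(x/2)+cos(y/2))² + 4 sin(x/2) sin(y/2)`. -/
def Fp (x y : ℝ) : ℝ :=
  (Real.cos (x / 2) + Real.cos (y / 2)) ^ 2 + 4 * Real.sin (x / 2) * Real.sin (y / 2)

/-- `F₋(x,y) = (cos(x/2)+cos(y/2))² − 4 sin(x/2) sin(y/2)`. -/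
def Fm (x y : ℝ) : ℝ :=
  (Real.cos (x / 2) + Real.cos (y / 2)) ^ 2 - 4 * Real.sin (x / 2) * Real.sin (y / 2)

/-- The kernel `K₁(x,y) = 4·𝟙(F₋(x,y) > 0)/√(F₋(x,y))`. -/
def K1 (x y : ℝ) : ℝ := if 0 < Fm x y then 4 / Real.sqrt (Fm x y) else 0

/-- The kernel `K₂(x,y) = 2/√(F₊(x,y))`. -/
def K2 (x y : ℝ) : ℝ := 2 / Real.sqrt (Fp x y)

/-- `V(x) = ∫_I K₂(x,y) dy`. -/
def VV (x : ℝ) : ℝ := ∫ y in II, K2 x y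

/-- `W(x) = sin²(x/2)·V(x)`. -/
def WW (x : ℝ) : ℝ := Real.sin (x / 2) ^ 2 * VV x

/-!
Every condition is `2π`-periodic in `x`, `y` and `z`, so one may take `x, y, z ∈ [0, 2π)` and
write `x = 2(ψ - φ)`, `z = 2(ψ + φ)`, `y = 2(θ + φ)`. The half-angle sines of `x`, `y`, `z` are then
nonnegative, and `Ω = 0` reads `sin (ψ - φ) + sin (θ + φ) - sin (ψ + φ) = |sin (θ - φ)|`.

If `sin (θ - φ) ≥ 0`, the equation factors as `sin φ · sin ((θ - ψ)/2) · sin ((θ + ψ)/2) = 0`,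
which gives `z = x` or `z = y`. If `sin (θ - φ) < 0`, it becomes `cos φ sin θ = cos ψ sin φ`, i.e.
`sin θ = tan φ cos ψ`, and the sign condition selects the branch
`θ ≡ arcsin (tan |φ| cos ψ) (mod π)`, which is `y ≡ h(x, z) (mod 2π)`. Conversely,
`|cos ψ| ≤ cos φ` gives `|arcsin (tan |φ| cos ψ)| ≤ |φ|`, which fixes the signs needed to check that
this branch does solve the equation.
-/

open AddCommGroup

lemma abs_sin_periodic : Function.Periodic (fun x => |sin x|) π := fun x => by
  simp [sin_add_pi]

lemma abs_sin_eq_of_modEq {a b : ℝ} (h : a ≡ b [PMOD π]) : |sin a| = |sin b| := by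
  obtain ⟨n, rfl⟩ := modEq_iff_eq_add_zsmul.1 h
  exact (abs_sin_periodic.zsmul n a).symm

lemma omg_eq_of_modEq {x x' : ℝ} (h : x ≡ x' [PMOD 2 * π]) : omg x = omg x' :=
  abs_sin_eq_of_modEq ((div_modEq_div two_ne_zero).2 (by rwa [mul_comm]))

lemma Omg_eq_of_modEq {x y z x' y' z' : ℝ} (hx : x ≡ x' [PMOD 2 * π]) (hy : y ≡ y' [PMOD 2 * π])
    (hz : z ≡ z' [PMOD 2 * π]) : Omg x y z = Omg x' y' z' := by
  simp only [Omg, omg_eq_of_modEq hx, omg_eq_of_modEq hy, omg_eq_of_modEq hz, omg_eq_of_modEq ((hx.add hy).sub hz)]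

lemma mod2pi_eq_toIcoMod (x : ℝ) : mod2pi x = toIcoMod two_pi_pos 0 x := by
  rw [toIcoMod, toIcoDiv_eq_floor, mod2pi, zsmul_eq_mul, sub_zero, mul_comm]

lemma mod2pi_mem_Ico (x : ℝ) : mod2pi x ∈ Ico 0 (2 * π) := by
  simpa [mod2pi_eq_toIcoMod] using toIcoMod_mem_Ico' two_pi_pos x

lemma modEq_iff_mod2pi_eq {x z : ℝ} : x ≡ z [PMOD 2 * π] ↔ mod2pi x = mod2pi z := by
  rw [mod2pi_eq_toIcoMod, mod2pi_eq_toIcoMod, toIcoMod_inj]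

lemma modEq_mod2pi (x : ℝ) : x ≡ mod2pi x [PMOD 2 * π] := by
  rw [modEq_iff_mod2pi_eq, mod2pi_eq_toIcoMod, mod2pi_eq_toIcoMod, toIcoMod_toIcoMod]

lemma hFPU_modEq_iff {x y z : ℝ} :
    hFPU x z ≡ y [PMOD 2 * π] ↔ h0 (mod2pi x) (mod2pi z) ≡ mod2pi y [PMOD 2 * π] := by
  have h : hFPU x z ≡ h0 (mod2pi x) (mod2pi z) [PMOD 2 * π] := by
    refine modEq_iff_eq_add_zsmul.2 ⟨⌊x / (2 * π)⌋, ?_⟩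
    rw [hFPU, mod2pi, zsmul_eq_mul]
    ring
  exact ⟨fun hy => h.symm.trans (hy.trans (modEq_mod2pi y)),
    fun hy => h.trans (hy.trans (modEq_mod2pi y).symm)⟩

lemma exists_eq_add_two_pi_mul_iff {a b : ℝ} :
    (∃ n : ℤ, b = a + 2 * π * n) ↔ a ≡ b [PMOD 2 * π] := by
  simp only [modEq_iff_eq_add_zsmul, zsmul_eq_mul, mul_comm]

lemma Omg_two_mul (a b c : ℝ) :
    Omg (2 * a) (2 * b) (2 * c) = |sin a| + |sin b| - |sin c| - |sin (a + b - c)| := by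
  simp only [Omg, omg, show 2 * a + 2 * b - 2 * c = 2 * (a + b - c) by ring,
    mul_div_cancel_left₀ _ (two_ne_zero' ℝ)]

lemma h0_two_mul (φ ψ : ℝ) :
    h0 (2 * (ψ - φ)) (2 * (ψ + φ)) = 2 * (arcsin (tan |φ| * cos ψ) + φ) := by
  rw [h0, show 2 * (ψ + φ) - 2 * (ψ - φ) = 4 * φ by ring,
    show |4 * φ| / 4 = |φ| by rw [abs_mul]; norm_num,
    show (2 * (ψ - φ) + 2 * (ψ + φ)) / 4 = ψ by ring]
  ring

lemma sin_sub_add_sin_add_sub_sin_add_sub_sin_sub (φ ψ θ : ℝ) :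
    sin (ψ - φ) + sin (θ + φ) - sin (ψ + φ) - sin (θ - φ) =
      -4 * sin φ * sin ((θ - ψ) / 2) * sin ((θ + ψ) / 2) := by
  have h : sin (ψ - φ) + sin (θ + φ) - sin (ψ + φ) - sin (θ - φ) = 2 * sin φ * (cos θ - cos ψ) := by
    simp only [sin_add, sin_sub]; ring
  rw [h, cos_sub_cos]; ring

lemma sin_sub_add_sin_add_sub_sin_add_add_sin_sub (φ ψ θ : ℝ) :
    sin (ψ - φ) + sin (θ + φ) - sin (ψ + φ) + sin (θ - φ) =
      2 * (cos φ * sin θ - cos ψ * sin φ) := by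
  simp only [sin_add, sin_sub]; ring

lemma abs_arcsin_le_of_abs_le_sin {t p : ℝ} (ht : |t| ≤ sin p) (hp₀ : 0 ≤ p) (hp : p ≤ π / 2) :
    |arcsin t| ≤ p := by
  have hp' : p ∈ Icc (-(π / 2)) (π / 2) := ⟨by linarith [pi_pos], hp⟩
  have hp'' : -p ∈ Icc (-(π / 2)) (π / 2) := ⟨by linarith, by linarith [pi_pos]⟩
  have ht₁ : t ∈ Icc (-1) 1 := abs_le.1 (ht.trans (sin_le_one p))
  refine abs_le.2 ⟨(le_arcsin_iff_sin_le hp'' ht₁).2 ?_, (arcsin_le_iff_le_sin ht₁ hp').2 ?_⟩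
  · rw [sin_neg]; linarith [neg_abs_le t]
  · linarith [le_abs_self t]

lemma abs_sin_add_sub_abs_sin_sub {p α : ℝ} (hα : |α| ≤ p) (hp : p ≤ π / 2) :
    |sin (p + α)| - |sin (p - α)| = 2 * cos p * sin α := by
  obtain ⟨hα₁, hα₂⟩ := abs_le.1 hα
  rw [abs_of_nonneg (sin_nonneg_of_nonneg_of_le_pi (by linarith) (by linarith)),
    abs_of_nonneg (sin_nonneg_of_nonneg_of_le_pi (by linarith) (by linarith)), sin_add, sin_sub]
  ring

section HalfAngles

variable {φ ψ θ : ℝ}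

lemma abs_cos_le_cos (h₁ : |φ| ≤ ψ) (h₂ : ψ + |φ| ≤ π) : |cos ψ| ≤ cos φ := by
  rw [← cos_abs φ]
  have hφ := abs_nonneg φ
  refine abs_le.2 ⟨?_, cos_le_cos_of_nonneg_of_le_pi hφ (by linarith) h₁⟩
  have := cos_le_cos_of_nonneg_of_le_pi (by linarith) (by linarith) (by linarith : ψ ≤ π - |φ|)
  rw [cos_pi_sub] at this
  linarith

lemma abs_tan_abs_mul_cos_le (h₁ : |φ| ≤ ψ) (h₂ : ψ + |φ| < π) :
    |tan |φ| * cos ψ| ≤ sin |φ| := by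
  have hcos : 0 < cos |φ| := cos_pos_of_mem_Ioo ⟨by linarith [abs_nonneg φ], by linarith⟩
  have hsin : 0 ≤ sin |φ| := sin_nonneg_of_nonneg_of_le_pi (abs_nonneg φ) (by linarith [pi_pos])
  rw [tan_eq_sin_div_cos, abs_mul, abs_div, abs_of_nonneg hsin, abs_of_pos hcos, div_mul_eq_mul_div,
    div_le_iff₀ hcos, cos_abs]
  exact mul_le_mul_of_nonneg_left (abs_cos_le_cos h₁ h₂.le) hsin

lemma eq_zero_or_eq_of_sin_sub_nonneg (h₁ : |φ| ≤ ψ) (h₂ : ψ + |φ| < π) (hθ₀ : 0 ≤ θ + φ)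
    (hθ₁ : θ + φ < π) (hs : 0 ≤ sin (θ - φ))
    (h : sin (ψ - φ) + sin (θ + φ) - sin (ψ + φ) - sin (θ - φ) = 0) : φ = 0 ∨ θ = ψ := by
  have := neg_abs_le φ
  have := le_abs_self φ
  rw [sin_sub_add_sin_add_sub_sin_add_sub_sin_sub] at h
  simp only [mul_eq_zero, neg_eq_zero, OfNat.ofNat_ne_zero, false_or] at h
  rcases h with (h | h) | h
  · exact Or.inl ((sin_eq_zero_iff_of_lt_of_lt (by linarith) (by linarith)).1 h)
  · have := (sin_eq_zero_iff_of_lt_of_lt (by linarith) (by linarith)).1 h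
    exact Or.inr (by linarith)
  · -- `θ + ψ = 0` forces `ψ = φ = -θ`, and then `sin (-2φ) ≥ 0` forces `φ = 0`
    have := (sin_eq_zero_iff_of_lt_of_lt (by linarith) (by linarith)).1 h
    refine Or.inl (le_antisymm ?_ (by linarith))
    by_contra! hφ
    linarith [sin_neg_of_neg_of_neg_pi_lt (x := θ - φ) (by linarith) (by linarith)]

lemma arcsin_tan_mul_cos_eq (hφ₀ : 0 < φ) (hφ₁ : φ < π / 2) (hθ₀ : 0 ≤ θ + φ) (hθ₁ : θ + φ ≤ π)
    (hs : sin (θ - φ) < 0) (h : cos φ * sin θ = cos ψ * sin φ) : arcsin (tan φ * cos ψ) = θ := by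
  have hθ : θ < φ := by
    by_contra! hle
    linarith [sin_nonneg_of_nonneg_of_le_pi (x := θ - φ) (by linarith) (by linarith)]
  have hcos : cos φ ≠ 0 := (cos_pos_of_mem_Ioo ⟨by linarith, hφ₁⟩).ne'
  have hsin : sin θ = tan φ * cos ψ := by
    rw [tan_eq_sin_div_cos]; field_simp; linarith
  rw [← hsin, arcsin_sin (by linarith) (by linarith)]

lemma eq_zero_or_eq_or_arcsin_modEq (h₁ : |φ| ≤ ψ) (h₂ : ψ + |φ| < π) (hθ₀ : 0 ≤ θ + φ)
    (hθ₁ : θ + φ < π) (h : |sin (ψ - φ)| + |sin (θ + φ)| - |sin (ψ + φ)| - |sin (θ - φ)| = 0) :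
    φ = 0 ∨ θ = ψ ∨ arcsin (tan |φ| * cos ψ) ≡ θ [PMOD π] := by
  have := neg_abs_le φ
  have := le_abs_self φ
  rw [abs_of_nonneg (sin_nonneg_of_nonneg_of_le_pi (x := ψ - φ) (by linarith) (by linarith)),
    abs_of_nonneg (sin_nonneg_of_nonneg_of_le_pi (x := θ + φ) (by linarith) (by linarith)),
    abs_of_nonneg (sin_nonneg_of_nonneg_of_le_pi (x := ψ + φ) (by linarith) (by linarith))] at h
  rcases le_or_gt 0 (sin (θ - φ)) with hs | hs
  · rw [abs_of_nonneg hs] at h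
    exact (eq_zero_or_eq_of_sin_sub_nonneg h₁ h₂ hθ₀ hθ₁ hs h).imp_right Or.inl
  rw [abs_of_neg hs] at h
  have hE : cos φ * sin θ = cos ψ * sin φ := by
    linarith [sin_sub_add_sin_add_sub_sin_add_add_sin_sub φ ψ θ]
  obtain ⟨hφ₁, hφ₂⟩ := abs_lt.1 (by linarith : |φ| < π / 2)
  rcases lt_trichotomy φ 0 with hneg | rfl | hpos
  · -- the reflection `(φ, ψ, θ) ↦ (-φ, π - ψ, π - θ)` preserves both `hs` and `hE`
    have := arcsin_tan_mul_cos_eq (φ := -φ) (ψ := π - ψ) (θ := π - θ) (by linarith)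
      (by linarith) (by linarith) (by linarith)
      (by rwa [show π - θ - -φ = π - (θ - φ) by ring, sin_pi_sub])
      (by rw [cos_neg, sin_pi_sub, cos_pi_sub, sin_neg]; linarith)
    rw [cos_pi_sub, mul_neg, arcsin_neg] at this
    refine Or.inr (Or.inr (modEq_iff_eq_add_zsmul.2 ⟨1, ?_⟩))
    rw [abs_of_neg hneg, one_zsmul]
    linarith
  · exact Or.inl rfl
  · rw [abs_of_pos hpos, arcsin_tan_mul_cos_eq hpos hφ₂ hθ₀ hθ₁.le hs hE]
    exact Or.inr (Or.inr (modEq_refl θ))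

lemma abs_sin_sub_add_abs_sin_arcsin_add_eq_zero (h₁ : |φ| ≤ ψ) (h₂ : ψ + |φ| < π) :
    |sin (ψ - φ)| + |sin (arcsin (tan |φ| * cos ψ) + φ)| - |sin (ψ + φ)|
      - |sin (arcsin (tan |φ| * cos ψ) - φ)| = 0 := by
  set t := tan |φ| * cos ψ with ht_def
  set α := arcsin t
  have hφ : |φ| < π / 2 := by linarith
  have ht := abs_tan_abs_mul_cos_le h₁ h₂
  have hsinα : sin α = t := sin_arcsin (by linarith [neg_abs_le t, sin_le_one |φ|])
    (by linarith [le_abs_self t, sin_le_one |φ|])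
  have hcos : cos |φ| ≠ 0 := (cos_pos_of_mem_Ioo ⟨by linarith [abs_nonneg φ], hφ⟩).ne'
  have hkey : |sin (|φ| + α)| - |sin (|φ| - α)| = 2 * sin |φ| * cos ψ := by
    rw [abs_sin_add_sub_abs_sin_sub (abs_arcsin_le_of_abs_le_sin ht (abs_nonneg φ) hφ.le) hφ.le, hsinα, ht_def,
      tan_eq_sin_div_cos]
    field_simp
  have hdiff : |sin (α + φ)| - |sin (α - φ)| = 2 * sin φ * cos ψ := by
    rcases le_total 0 φ with hφ₀ | hφ₀
    · rwa [abs_of_nonneg hφ₀, add_comm, show φ - α = -(α - φ) by ring, sin_neg, abs_neg] at hkey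
    · rw [abs_of_nonpos hφ₀, sin_neg, show -φ + α = α - φ by ring,
        show -φ - α = -(α + φ) by ring, sin_neg, abs_neg] at hkey
      linarith
  have := neg_abs_le φ
  have := le_abs_self φ
  rw [abs_of_nonneg (sin_nonneg_of_nonneg_of_le_pi (x := ψ - φ) (by linarith) (by linarith)),
    abs_of_nonneg (sin_nonneg_of_nonneg_of_le_pi (x := ψ + φ) (by linarith) (by linarith)),
    sin_sub ψ φ, sin_add ψ φ]
  linear_combination hdiff

end HalfAngles

theorem Omg_eq_zero_iff_of_mem_Ico {x y z : ℝ} (hx : x ∈ Ico 0 (2 * π)) (hy : y ∈ Ico 0 (2 * π))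
    (hz : z ∈ Ico 0 (2 * π)) : Omg x y z = 0 ↔ x = z ∨ y = z ∨ h0 x z ≡ y [PMOD 2 * π] := by
  obtain ⟨φ, ψ, θ, rfl, rfl, rfl⟩ : ∃ φ ψ θ : ℝ, x = 2 * (ψ - φ) ∧ y = 2 * (θ + φ) ∧ z = 2 * (ψ + φ) :=
    ⟨(z - x) / 4, (x + z) / 4, y / 2 - (z - x) / 4, by ring, by ring, by ring⟩
  simp only [mem_Ico] at hx hy hz
  have h₁ : |φ| ≤ ψ := abs_le.2 ⟨by linarith, by linarith⟩
  have h₂ : ψ + |φ| < π := by cases abs_cases φ <;> linarith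
  rw [Omg_two_mul, h0_two_mul, show ψ - φ + (θ + φ) - (ψ + φ) = θ - φ by ring,
    show 2 * (ψ - φ) = 2 * (ψ + φ) ↔ φ = 0 by constructor <;> intro <;> linarith,
    show 2 * (θ + φ) = 2 * (ψ + φ) ↔ θ = ψ by constructor <;> intro <;> linarith,
    mul_modEq_mul_left two_ne_zero, mul_div_cancel_left₀ _ two_ne_zero,
    (modEq_refl φ).add_iff_right]
  refine ⟨eq_zero_or_eq_or_arcsin_modEq h₁ h₂ (by linarith) (by linarith), ?_⟩
  rintro (rfl | rfl | h)
  · simp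
  · ring
  · rw [← abs_sin_eq_of_modEq (h.add_right φ), ← abs_sin_eq_of_modEq (h.sub_right φ)]
    exact abs_sin_sub_add_abs_sin_arcsin_add_eq_zero h₁ h₂

/-- **Corollary 3.2.**  `Ω(x,y,z) = 0` if and only if, modulo `2π`, `z = x`, `z = y`, or
`y = h(x,z)`. -/
theorem energy_constraint_zero_set (x y z : ℝ) :
    Omg x y z = 0 ↔
      ((∃ n : ℤ, z = x + 2 * π * n) ∨ (∃ n : ℤ, z = y + 2 * π * n) ∨
        (∃ n : ℤ, y = hFPU x z + 2 * π * n)) := by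
  simp only [exists_eq_add_two_pi_mul_iff]
  rw [Omg_eq_of_modEq (modEq_mod2pi x) (modEq_mod2pi y) (modEq_mod2pi z),
    Omg_eq_zero_iff_of_mem_Ico (mod2pi_mem_Ico x) (mod2pi_mem_Ico y) (mod2pi_mem_Ico z),
    modEq_iff_mod2pi_eq (x := x), modEq_iff_mod2pi_eq (x := y), hFPU_modEq_iff]
end
end

section
/- Let Z = {(x,y,z) ∈ D : Ω(x,y,z) = 0} and Z_± = Z ∩ U_±. Then: (i) Z₊ consists exactly of those (x,y,z) ∈ D for which z = x, or z = y, or y = x ∈ {0, 2π}. (ii) Z₋ consists exactly of those (x,y,z) ∈ D satisfying one of: x = 0 and z = 2π; x = 2π and z = 0; x ≤ z and y = h(x,z); x ≥ z and y = 2π + h(x,z). (iii) For every (x,y,z) ∈ U₋ with x ≠ z, one has sign(z−x) · ∂_y Ω₋(x,y,z) ≥ cos²((x−z)/4). -/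
open MeasureTheory Real Set Filter
open scoped Topology ENNReal ComplexConjugate

noncomputable section

/-- Membership in `D = [0,2π]³`. -/
def inD (x y z : ℝ) : Prop :=
  x ∈ Set.Icc 0 (2 * π) ∧ y ∈ Set.Icc 0 (2 * π) ∧ z ∈ Set.Icc 0 (2 * π)

/-- Membership in `U₊ = {(x,y,z) ∈ D : x+y−2π ≤ z ≤ x+y}`. -/
def inUp (x y z : ℝ) : Prop := inD x y z ∧ x + y - 2 * π ≤ z ∧ z ≤ x + y

/-- Membership in `U₋ = {(x,y,z) ∈ D : z ≥ x+y or z ≤ x+y−2π}`. -/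
def inUm (x y z : ℝ) : Prop := inD x y z ∧ (x + y ≤ z ∨ z ≤ x + y - 2 * π)

/-- `Ω₋(x,y,z) = sin(x/2) + sin(y/2) − sin(z/2) + sin((x+y−z)/2)` (i.e. `Ω_σ` with `σ = −1`). -/
def Omm (x y z : ℝ) : ℝ :=
  Real.sin (x / 2) + Real.sin (y / 2) - Real.sin (z / 2) + Real.sin ((x + y - z) / 2)

lemma sinAddSin (a b : ℝ) : Real.sin a + Real.sin b = 2 * Real.sin ((a+b)/2) * Real.cos ((a-b)/2) := by
  have h := Real.sin_sub_sin a (-b)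
  rw [Real.sin_neg, show ((a - -b)/2 : ℝ) = (a+b)/2 by ring,
    show ((a + -b)/2 : ℝ) = (a-b)/2 by ring] at h
  linarith

lemma omg_eq {t : ℝ} (h1 : 0 ≤ t) (h2 : t ≤ 2*π) : omg t = Real.sin (t/2) := by
  have : 0 ≤ Real.sin (t/2) := Real.sin_nonneg_of_nonneg_of_le_pi (by linarith) (by linarith)
  exact abs_of_nonneg this

lemma sin_nonpos_aux {t : ℝ} (h : -π ≤ t ∧ t ≤ 0 ∨ π ≤ t ∧ t ≤ 2*π) : Real.sin t ≤ 0 := by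
  rcases h with ⟨h1, h2⟩ | ⟨h1, h2⟩
  · have : 0 ≤ Real.sin (-t) := Real.sin_nonneg_of_nonneg_of_le_pi (by linarith) (by linarith)
    rw [Real.sin_neg] at this; linarith
  · have : 0 ≤ Real.sin (t - π) := Real.sin_nonneg_of_nonneg_of_le_pi (by linarith) (by linarith)
    rw [Real.sin_sub_pi] at this; linarith

lemma Omg_eq_Omm {x y z : ℝ} (h : inUm x y z) : Omg x y z = Omm x y z := by
  obtain ⟨⟨⟨hx0, hx1⟩, ⟨hy0, hy1⟩, ⟨hz0, hz1⟩⟩, hc⟩ := h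
  have hw : Real.sin ((x + y - z)/2) ≤ 0 := by
    apply sin_nonpos_aux
    rcases hc with hc | hc
    · left; constructor <;> linarith
    · right; constructor <;> linarith
  unfold Omg Omm
  rw [omg_eq hx0 hx1, omg_eq hy0 hy1, omg_eq hz0 hz1]
  unfold omg
  rw [abs_of_nonpos hw]; ring

lemma Omm_factor (x y z : ℝ) : Omm x y z =
    2*(Real.cos ((x+z)/4) * Real.sin ((x-z)/4) + Real.sin ((2*y+x-z)/4) * Real.cos ((x-z)/4)) := by
  unfold Omm
  have h1 := Real.sin_sub_sin (x/2) (z/2)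
  have h2 := sinAddSin (y/2) ((x+y-z)/2)
  rw [show ((x/2 - z/2)/2 : ℝ) = (x-z)/4 by ring, show ((x/2 + z/2)/2 : ℝ) = (x+z)/4 by ring] at h1
  rw [show ((y/2 + (x+y-z)/2)/2 : ℝ) = (2*y+x-z)/4 by ring,
    show ((y/2 - (x+y-z)/2)/2 : ℝ) = -((x-z)/4) by ring, Real.cos_neg] at h2
  linarith

lemma Omp_factor (x y z : ℝ) :
    Real.sin (x/2) + Real.sin (y/2) - Real.sin (z/2) - Real.sin ((x+y-z)/2) =
    2*Real.sin ((x+y)/4)*(Real.cos ((x-y)/4) - Real.cos ((x+y-2*z)/4)) := by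
  have h1 := sinAddSin (x/2) (y/2)
  have h2 := sinAddSin (z/2) ((x+y-z)/2)
  rw [show ((x/2 + y/2)/2 : ℝ) = (x+y)/4 by ring, show ((x/2 - y/2)/2 : ℝ) = (x-y)/4 by ring] at h1
  rw [show ((z/2 + (x+y-z)/2)/2 : ℝ) = (x+y)/4 by ring,
    show ((z/2 - (x+y-z)/2)/2 : ℝ) = -((x+y-2*z)/4) by ring, Real.cos_neg] at h2
  linarith

lemma cos_abs_div4 (t : ℝ) : Real.cos (|t|/4) = Real.cos (t/4) := by
  rcases abs_cases t with ⟨h, _⟩ | ⟨h, _⟩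
  · rw [h]
  · rw [h, show (-t/4 : ℝ) = -(t/4) by ring, Real.cos_neg]

lemma part_i (x y z : ℝ) (h : inUp x y z) :
    Omg x y z = 0 ↔ (z = x ∨ z = y ∨ (y = x ∧ (x = 0 ∨ x = 2 * π))) := by
  obtain ⟨⟨⟨hx0, hx1⟩, ⟨hy0, hy1⟩, ⟨hz0, hz1⟩⟩, hc1, hc2⟩ := h
  have hpi := Real.pi_pos
  have hw0 : (0:ℝ) ≤ x + y - z := by linarith
  have hw1 : x + y - z ≤ 2*π := by linarith
  have hOmg : Omg x y z =
      2*Real.sin ((x+y)/4)*(Real.cos ((x-y)/4) - Real.cos ((x+y-2*z)/4)) := by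
    unfold Omg
    rw [omg_eq hx0 hx1, omg_eq hy0 hy1, omg_eq hz0 hz1, omg_eq hw0 hw1]
    exact Omp_factor x y z
  rw [hOmg]
  constructor
  · intro h0
    rcases mul_eq_zero.mp h0 with hs | hc
    · have hs' : Real.sin ((x+y)/4) = 0 := by
        rcases mul_eq_zero.mp hs with h | h
        · norm_num at h
        · exact h
      rcases eq_or_lt_of_le (show (x+y)/4 ≤ π by linarith) with he | hlt
      · exact Or.inl (by linarith)
      · have := (Real.sin_eq_zero_iff_of_lt_of_lt (by linarith) hlt).mp hs'
        exact Or.inl (by linarith)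
    · have hceq : Real.cos (|x-y|/4) = Real.cos (|x+y-2*z|/4) := by
        rw [cos_abs_div4, cos_abs_div4]; linarith
      have habs : |x-y|/4 = |x+y-2*z|/4 := by
        apply Real.injOn_cos ⟨by positivity, ?_⟩ ⟨by positivity, ?_⟩ hceq
        · rcases abs_cases (x-y) with ⟨h1, _⟩ | ⟨h1, _⟩ <;> rw [h1] <;> linarith
        · rcases abs_cases (x+y-2*z) with ⟨h1, _⟩ | ⟨h1, _⟩ <;> rw [h1] <;> linarith
      have hsq : (x-y)^2 = (x+y-2*z)^2 := by
        have h4 : |x-y| = |x+y-2*z| := by linarith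
        have := congrArg (fun t => t^2) h4
        simpa [sq_abs] using this
      have : (z - y) * (z - x) = 0 := by nlinarith
      rcases mul_eq_zero.mp this with h | h
      · exact Or.inr (Or.inl (by linarith))
      · exact Or.inl (by linarith)
  · intro h0
    rcases h0 with h | h | ⟨h1, h2 | h2⟩
    · rw [show ((x+y-2*z)/4 : ℝ) = -((x-y)/4) by rw [h]; ring, Real.cos_neg]; ring
    · rw [show ((x+y-2*z)/4 : ℝ) = (x-y)/4 by rw [h]; ring]; ring
    · have hs : Real.sin ((x+y)/4) = 0 := by
        rw [show ((x+y)/4 : ℝ) = 0 by rw [h1, h2]; ring]; simp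
      rw [hs]; ring
    · have hs : Real.sin ((x+y)/4) = 0 := by
        rw [show ((x+y)/4 : ℝ) = π by rw [h1, h2]; ring]; simp
      rw [hs]; ring

lemma deriv_Omm (x z y : ℝ) :
    deriv (fun t => Omm x t z) y = (Real.cos (y/2) + Real.cos ((x+y-z)/2))/2 := by
  have h1 : HasDerivAt (fun t : ℝ => Real.sin (t/2)) (Real.cos (y/2) * (1/2)) y := by
    exact (Real.hasDerivAt_sin (y/2)).comp y ((hasDerivAt_id y).div_const 2)
  have h2 : HasDerivAt (fun t : ℝ => Real.sin ((x+t-z)/2)) (Real.cos ((x+y-z)/2) * (1/2)) y := by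
    have hin : HasDerivAt (fun t : ℝ => (x+t-z)/2) (1/2) y := by
      have := (((hasDerivAt_id y).const_add x).sub_const z).div_const 2
      simpa using this
    exact (Real.hasDerivAt_sin ((x+y-z)/2)).comp y hin
  have h3 : HasDerivAt (fun t => Omm x t z)
      (Real.cos (y/2) * (1/2) + Real.cos ((x+y-z)/2) * (1/2)) y := by
    unfold Omm
    exact ((h1.const_add _).sub_const _).add h2
  rw [h3.deriv]; ring

lemma part_iii (x y z : ℝ) (h : inUm x y z) (hxz : x ≠ z) :
    Real.cos ((x - z) / 4) ^ 2 ≤ Real.sign (z - x) * deriv (fun t => Omm x t z) y := by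
  obtain ⟨⟨⟨hx0, hx1⟩, ⟨hy0, hy1⟩, ⟨hz0, hz1⟩⟩, hc⟩ := h
  have hpi := Real.pi_pos
  rw [deriv_Omm]
  have hsum : Real.cos (y/2) + Real.cos ((x+y-z)/2)
      = 2 * Real.cos ((x+2*y-z)/4) * Real.cos ((z-x)/4) := by
    have := Real.cos_add_cos (y/2) ((x+y-z)/2)
    rw [show ((y/2 + (x+y-z)/2)/2 : ℝ) = (x+2*y-z)/4 by ring,
      show ((y/2 - (x+y-z)/2)/2 : ℝ) = (z-x)/4 by ring] at this
    exact this
  rw [hsum]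
  have hcxz : Real.cos ((x-z)/4) = Real.cos ((z-x)/4) := by
    rw [show ((x-z)/4 : ℝ) = -((z-x)/4) by ring, Real.cos_neg]
  rw [hcxz]
  rcases hc with hc | hc
  · -- z ≥ x + y, so z > x
    have hzx : x < z := by rcases lt_or_eq_of_le (by linarith : x ≤ z) with h | h
                           · exact h
                           · exact absurd h hxz
    rw [Real.sign_of_pos (by linarith : (0:ℝ) < z - x)]
    have hφ0 : (0:ℝ) ≤ (z-x)/4 := by linarith
    have hφ1 : (z-x)/4 ≤ π/2 := by linarith
    have hcφ : 0 ≤ Real.cos ((z-x)/4) :=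
      Real.cos_nonneg_of_mem_Icc ⟨by linarith, hφ1⟩
    have hθ : Real.cos ((z-x)/4) ≤ Real.cos ((x+2*y-z)/4) := by
      rcases le_or_gt 0 ((x+2*y-z)/4) with hθ0 | hθ0
      · exact Real.cos_le_cos_of_nonneg_of_le_pi hθ0 (by linarith) (by linarith)
      · rw [show ((x+2*y-z)/4 : ℝ) = -(-((x+2*y-z)/4)) by ring, Real.cos_neg]
        exact Real.cos_le_cos_of_nonneg_of_le_pi (by linarith) (by linarith) (by linarith)
    nlinarith
  · -- z ≤ x + y - 2π, so x > z
    have hzx : z < x := by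
      rcases lt_or_eq_of_le (by linarith : z ≤ x) with h | h
      · exact h
      · exact absurd h.symm hxz
    rw [Real.sign_of_neg (by linarith : z - x < 0)]
    have hφ1 : (x-z)/4 ≤ π/2 := by linarith
    have hcφ : 0 ≤ Real.cos ((z-x)/4) := by
      rw [show ((z-x)/4 : ℝ) = -((x-z)/4) by ring, Real.cos_neg]
      exact Real.cos_nonneg_of_mem_Icc ⟨by linarith, hφ1⟩
    -- θ := (x+2y-z)/4 ∈ [π - φ, π + φ] with φ = (x-z)/4; cos θ = -cos(θ - π)
    have key : Real.cos ((x+2*y-z)/4 - π) = -Real.cos ((x+2*y-z)/4) :=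
      Real.cos_sub_pi _
    have hθ : Real.cos ((z-x)/4) ≤ Real.cos ((x+2*y-z)/4 - π) := by
      rw [show ((z-x)/4 : ℝ) = -((x-z)/4) by ring, Real.cos_neg]
      rcases le_or_gt 0 ((x+2*y-z)/4 - π) with hθ0 | hθ0
      · exact Real.cos_le_cos_of_nonneg_of_le_pi hθ0 (by linarith) (by linarith)
      · rw [show ((x+2*y-z)/4 - π : ℝ) = -(-((x+2*y-z)/4 - π)) by ring, Real.cos_neg]
        exact Real.cos_le_cos_of_nonneg_of_le_pi (by linarith) (by linarith) (by linarith)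
    nlinarith

lemma sin_pi_add' (t : ℝ) : Real.sin (π + t) = -Real.sin t := by
  have h := Real.sin_sub_pi (π + t)
  rw [show π + t - π = t by ring] at h
  linarith

lemma absA_le {d ψ : ℝ} (hd0 : 0 ≤ d) (hd1 : d < 2*π) (hψ1 : d/4 ≤ ψ) (hψ2 : ψ ≤ π - d/4) :
    |Real.tan (d/4) * Real.cos ψ| ≤ Real.sin (d/4) := by
  have hpi := Real.pi_pos
  have hcos : 0 < Real.cos (d/4) := Real.cos_pos_of_mem_Ioo ⟨by linarith, by linarith⟩
  have hsin : 0 ≤ Real.sin (d/4) := Real.sin_nonneg_of_nonneg_of_le_pi (by linarith) (by linarith)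
  have htan : 0 ≤ Real.tan (d/4) := by
    rw [Real.tan_eq_sin_div_cos]; positivity
  have hcψ : |Real.cos ψ| ≤ Real.cos (d/4) := by
    rcases le_or_gt 0 (Real.cos ψ) with h | h
    · rw [abs_of_nonneg h]
      exact Real.cos_le_cos_of_nonneg_of_le_pi (by linarith) (by linarith) hψ1
    · rw [abs_of_neg h, show -Real.cos ψ = Real.cos (π - ψ) by rw [Real.cos_pi_sub]]
      exact Real.cos_le_cos_of_nonneg_of_le_pi (by linarith) (by linarith) (by linarith)
  calc |Real.tan (d/4) * Real.cos ψ| = Real.tan (d/4) * |Real.cos ψ| := by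
        rw [abs_mul, abs_of_nonneg htan]
    _ ≤ Real.tan (d/4) * Real.cos (d/4) := by
        exact mul_le_mul_of_nonneg_left hcψ htan
    _ = Real.sin (d/4) := by
        rw [Real.tan_eq_sin_div_cos]; field_simp

lemma part_ii (x y z : ℝ) (h : inUm x y z) :
    Omg x y z = 0 ↔
      ((x = 0 ∧ z = 2 * π) ∨ (x = 2 * π ∧ z = 0) ∨
        (x ≤ z ∧ y = h0 x z) ∨ (z ≤ x ∧ y = 2 * π + h0 x z)) := by
  have hOm := Omg_eq_Omm h
  obtain ⟨⟨⟨hx0, hx1⟩, ⟨hy0, hy1⟩, ⟨hz0, hz1⟩⟩, hc⟩ := h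
  have hpi := Real.pi_pos
  rw [hOm, Omm_factor]
  have hsxz : Real.sin ((x-z)/4) = -Real.sin ((z-x)/4) := by
    rw [show ((x-z)/4 : ℝ) = -((z-x)/4) by ring, Real.sin_neg]
  have hcxz : Real.cos ((x-z)/4) = Real.cos ((z-x)/4) := by
    rw [show ((x-z)/4 : ℝ) = -((z-x)/4) by ring, Real.cos_neg]
  constructor
  · intro heq
    rcases hc with hc | hc
    · -- z ≥ x + y : x ≤ z case
      by_cases hcor : x = 0 ∧ z = 2*π
      · exact Or.inl hcor
      · right; right; left
        refine ⟨by linarith, ?_⟩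
        have hd1 : z - x < 2*π := by
          rcases lt_or_eq_of_le (show z - x ≤ 2*π by linarith) with h' | h'
          · exact h'
          · exact absurd ⟨by linarith, by linarith⟩ hcor
        have hcos : 0 < Real.cos ((z-x)/4) :=
          Real.cos_pos_of_mem_Ioo ⟨by linarith, by linarith⟩
        -- equation: sin θ' * cos φ' = cos ψ * sin φ'
        have heq2 : Real.sin ((2*y+x-z)/4) * Real.cos ((z-x)/4)
            = Real.cos ((x+z)/4) * Real.sin ((z-x)/4) := by
          rw [hsxz, hcxz] at heq; linarith
        have hθ1 : -(π/2) ≤ (2*y+x-z)/4 := by linarith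
        have hθ2 : (2*y+x-z)/4 ≤ π/2 := by linarith
        have harc : Real.arcsin (Real.sin ((2*y+x-z)/4)) = (2*y+x-z)/4 :=
          Real.arcsin_sin hθ1 hθ2
        have hA : Real.sin ((2*y+x-z)/4) = Real.tan ((z-x)/4) * Real.cos ((x+z)/4) := by
          rw [Real.tan_eq_sin_div_cos, div_mul_eq_mul_div, eq_div_iff hcos.ne']
          linarith [heq2]
        unfold h0
        rw [abs_of_nonneg (show (0:ℝ) ≤ z - x by linarith), ← hA, harc]
        ring
    · -- z ≤ x + y - 2π : z ≤ x case
      by_cases hcor : x = 2*π ∧ z = 0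
      · exact Or.inr (Or.inl hcor)
      · right; right; right
        refine ⟨by linarith, ?_⟩
        have hd1 : x - z < 2*π := by
          rcases lt_or_eq_of_le (show x - z ≤ 2*π by linarith) with h' | h'
          · exact h'
          · exact absurd ⟨by linarith, by linarith⟩ hcor
        have hcos : 0 < Real.cos ((x-z)/4) :=
          Real.cos_pos_of_mem_Ioo ⟨by linarith, by linarith⟩
        rw [hcxz] at hcos
        have heq2 : Real.sin ((2*y+x-z)/4 - π) * Real.cos ((z-x)/4)
            = Real.cos ((x+z)/4) * Real.sin ((x-z)/4) := by
          rw [Real.sin_sub_pi]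
          rw [hsxz, hcxz] at heq
          rw [show Real.sin ((x-z)/4) = -Real.sin ((z-x)/4) from hsxz]
          linarith
        have hθ1 : -(π/2) ≤ (2*y+x-z)/4 - π := by linarith
        have hθ2 : (2*y+x-z)/4 - π ≤ π/2 := by linarith
        have harc : Real.arcsin (Real.sin ((2*y+x-z)/4 - π)) = (2*y+x-z)/4 - π :=
          Real.arcsin_sin hθ1 hθ2
        have hA : Real.sin ((2*y+x-z)/4 - π) = Real.tan ((x-z)/4) * Real.cos ((x+z)/4) := by
          rw [Real.tan_eq_sin_div_cos, hsxz, hcxz, div_mul_eq_mul_div, eq_div_iff hcos.ne']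
          rw [hsxz] at heq2
          linarith [heq2]
        unfold h0
        rw [abs_of_nonpos (show z - x ≤ 0 by linarith),
          show (-(z-x)/4 : ℝ) = (x-z)/4 by ring, ← hA, harc]
        ring
  · intro hyp
    rcases hyp with ⟨hx, hz⟩ | ⟨hx, hz⟩ | ⟨hxz, hy⟩ | ⟨hxz, hy⟩
    · subst hx; subst hz
      rw [show ((0 - 2*π)/4 : ℝ) = -(π/2) by ring, show ((0 + 2*π)/4 : ℝ) = π/2 by ring,
        Real.cos_pi_div_two, Real.cos_neg, Real.cos_pi_div_two]
      ring
    · subst hx; subst hz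
      rw [show ((2*π - 0)/4 : ℝ) = π/2 by ring, show ((2*π + 0)/4 : ℝ) = π/2 by ring,
        Real.cos_pi_div_two]
      ring
    · -- x ≤ z, y = h0 x z
      by_cases hcor : z - x = 2*π
      · have hx : x = 0 := by linarith
        have hz : z = 2*π := by linarith
        subst hx; subst hz
        rw [show ((0 - 2*π)/4 : ℝ) = -(π/2) by ring, show ((0 + 2*π)/4 : ℝ) = π/2 by ring,
          Real.cos_pi_div_two, Real.cos_neg, Real.cos_pi_div_two]
        ring
      · have hd1 : z - x < 2*π := lt_of_le_of_ne (by linarith) hcor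
        have hd0 : (0:ℝ) ≤ z - x := by linarith
        have hcos : 0 < Real.cos ((z-x)/4) :=
          Real.cos_pos_of_mem_Ioo ⟨by linarith, by linarith⟩
        set A := Real.tan ((z-x)/4) * Real.cos ((x+z)/4) with hAdef
        have hAle : |A| ≤ Real.sin ((z-x)/4) :=
          absA_le hd0 hd1 (by linarith) (by linarith)
        have hs1 : Real.sin ((z-x)/4) ≤ 1 := Real.sin_le_one _
        have hsinarc : Real.sin (Real.arcsin A) = A :=
          Real.sin_arcsin (by cases abs_le.mp (hAle.trans hs1); linarith)
            (by cases abs_le.mp (hAle.trans hs1); linarith)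
        have hyval : y = (z-x)/2 + 2 * Real.arcsin A := by
          rw [hy]; unfold h0; rw [abs_of_nonneg hd0]
        have hθ : (2*y+x-z)/4 = Real.arcsin A := by rw [hyval]; ring
        rw [hθ, hsinarc, hsxz, hcxz, hAdef, Real.tan_eq_sin_div_cos]
        field_simp
        ring
    · -- z ≤ x, y = 2π + h0 x z
      by_cases hcor : x - z = 2*π
      · have hx : x = 2*π := by linarith
        have hz : z = 0 := by linarith
        subst hx; subst hz
        rw [show ((2*π - 0)/4 : ℝ) = π/2 by ring, show ((2*π + 0)/4 : ℝ) = π/2 by ring,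
          Real.cos_pi_div_two]
        ring
      · have hd1 : x - z < 2*π := lt_of_le_of_ne (by linarith) hcor
        have hd0 : (0:ℝ) ≤ x - z := by linarith
        have hcos : 0 < Real.cos ((x-z)/4) :=
          Real.cos_pos_of_mem_Ioo ⟨by linarith, by linarith⟩
        set A := Real.tan ((x-z)/4) * Real.cos ((x+z)/4) with hAdef
        have hAle : |A| ≤ Real.sin ((x-z)/4) :=
          absA_le hd0 hd1 (by linarith) (by linarith)
        have hs1 : Real.sin ((x-z)/4) ≤ 1 := Real.sin_le_one _
        have hsinarc : Real.sin (Real.arcsin A) = A :=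
          Real.sin_arcsin (by cases abs_le.mp (hAle.trans hs1); linarith)
            (by cases abs_le.mp (hAle.trans hs1); linarith)
        have hyval : y = 2*π + (z-x)/2 + 2 * Real.arcsin A := by
          rw [hy]; unfold h0
          rw [abs_of_nonpos (show z - x ≤ 0 by linarith),
            show (-(z-x)/4 : ℝ) = (x-z)/4 by ring]
          ring
        have hθ : (2*y+x-z)/4 = π + Real.arcsin A := by rw [hyval]; ring
        have hsθ : Real.sin ((2*y+x-z)/4) = -A := by
          rw [hθ, sin_pi_add', hsinarc]
        rw [hsθ, hAdef, Real.tan_eq_sin_div_cos]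
        field_simp
        ring

/-- **Lemma 3.1.**  Classification of the zero set `Z` of `Ω` in `D`:
(i) on `U₊`, the zeros are exactly `z = x`, `z = y`, or `y = x ∈ {0, 2π}`;
(ii) on `U₋`, the zeros are exactly the corners `(x,z) ∈ {(0,2π), (2π,0)}`, together with
`y = h(x,z)` when `x ≤ z` and `y = 2π + h(x,z)` when `x ≥ z`;
(iii) for `(x,y,z) ∈ U₋` with `x ≠ z`, `sign(z−x)·∂_y Ω₋(x,y,z) ≥ cos²((x−z)/4)`. -/
theorem zero_set_classification :
    (∀ x y z : ℝ, inUp x y z →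
      (Omg x y z = 0 ↔ (z = x ∨ z = y ∨ (y = x ∧ (x = 0 ∨ x = 2 * π))))) ∧
    (∀ x y z : ℝ, inUm x y z →
      (Omg x y z = 0 ↔
        ((x = 0 ∧ z = 2 * π) ∨ (x = 2 * π ∧ z = 0) ∨
          (x ≤ z ∧ y = h0 x z) ∨ (z ≤ x ∧ y = 2 * π + h0 x z)))) ∧
    (∀ x y z : ℝ, inUm x y z → x ≠ z →
      Real.cos ((x - z) / 4) ^ 2 ≤ Real.sign (z - x) * deriv (fun t => Omm x t z) y) := by
  exact ⟨part_i, part_ii, part_iii⟩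
end
end

section
/- For every x ∈ (0,2π) there exist y₁, y₂ with 0 < y₁ < 2π − x < y₂ < 2π such that F₋(x,y) ≤ 0 for y₁ ≤ y ≤ y₂, and there is a constant C > 0 independent of x and y such that F₋(x,y) ≥ C (y₁ − y) sin(x/2) for 0 ≤ y < y₁, and F₋(x,y) ≥ C (y − y₂) sin(x/2) for y₂ < y ≤ 2π. -/
open MeasureTheory Real Set Filter
open scoped Topology ENNReal ComplexConjugate

noncomputable section

/-!
`F₋(x,y) = -P(x,y) · P(2π-x, 2π-y)` with `P(x,y) = 2 cos((x+y)/4) - sin(x/2) - sin(y/2)`, and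
`-P(2π-x, 2π-y) = P(x,y) + 2 (sin(x/2) + sin(y/2))`. For fixed `x`,
`∂_y P = -sin((6π-3y-x)/8) sin((2π-y+x)/8) ≤ -(2π-y)²/800` on `[0, 2π-x]`, so `P(x,·)` falls from
`P(x,0) > 0` to `P(x,2π-x) = -2 sin(x/2)` and has a zero `y₁` in between, while on
`[2π-x, 2π]` every term of `P` is nonpositive. `y₂` is the reflection of the zero belonging to
`2π-x`, so `F₋ ≤ 0` on `[y₁, y₂]` as a product of two nonpositive factors.

Below `y₁`, `F₋ ≥ 2P(sin(x/2) + sin(y/2))` and `P(x,y) ≥ (y₁-y)(2π-y)²/2400`. When `2π-y ≥ π`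
the factor `(2π-y)²` is bounded below; otherwise the term `sin(y/2) ≥ (2π-y)/10` is used together
with `sin(x/2) ≤ (2π-y₁)³/64`, which the equation `P(x,y₁) = 0` forces. The bound above `y₂` is
the reflected one, by `F₋(2π-x, 2π-y) = F₋(x,y)`.
-/

def fmFactor (x y : ℝ) : ℝ := 2 * cos ((x + y) / 4) - sin (x / 2) - sin (y / 2)

lemma Fm_eq_fmFactor_mul (x y : ℝ) :
    Fm x y = fmFactor x y * (fmFactor x y + 2 * (sin (x / 2) + sin (y / 2))) := by
  have hcos : cos (x / 2) * cos (y / 2) - sin (x / 2) * sin (y / 2)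
      = 2 * cos ((x + y) / 4) ^ 2 - 1 := by
    rw [← cos_add, show x / 2 + y / 2 = 2 * ((x + y) / 4) by ring, cos_two_mul]
  unfold Fm fmFactor
  linear_combination sin_sq_add_cos_sq (x / 2) + sin_sq_add_cos_sq (y / 2) + 2 * hcos

lemma fmFactor_two_pi_sub (x y : ℝ) :
    fmFactor (2 * π - x) (2 * π - y) = -(fmFactor x y + 2 * (sin (x / 2) + sin (y / 2))) := by
  unfold fmFactor
  rw [show (2 * π - x + (2 * π - y)) / 4 = π - (x + y) / 4 by ring,
    show (2 * π - x) / 2 = π - x / 2 by ring, show (2 * π - y) / 2 = π - y / 2 by ring,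
    cos_pi_sub, sin_pi_sub, sin_pi_sub]
  ring

lemma Fm_eq_neg_fmFactor_mul_fmFactor_two_pi_sub (x y : ℝ) :
    Fm x y = -(fmFactor x y * fmFactor (2 * π - x) (2 * π - y)) := by
  rw [Fm_eq_fmFactor_mul, fmFactor_two_pi_sub]
  ring

lemma Fm_two_pi_sub (x y : ℝ) : Fm (2 * π - x) (2 * π - y) = Fm x y := by
  rw [Fm_eq_neg_fmFactor_mul_fmFactor_two_pi_sub,
    Fm_eq_neg_fmFactor_mul_fmFactor_two_pi_sub x, sub_sub_cancel, sub_sub_cancel, mul_comm]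

lemma hasDerivAt_fmFactor (x y : ℝ) :
    HasDerivAt (fmFactor x)
      (-(sin ((6 * π - 3 * y - x) / 8) * sin ((2 * π - y + x) / 8))) y := by
  have hprod : 2 * sin ((6 * π - 3 * y - x) / 8) * sin ((2 * π - y + x) / 8)
      = sin ((x + y) / 4) + cos (y / 2) := by
    rw [two_mul_sin_mul_sin, show (6 * π - 3 * y - x) / 8 - (2 * π - y + x) / 8
        = π / 2 - (x + y) / 4 by ring, show (6 * π - 3 * y - x) / 8 + (2 * π - y + x) / 8
        = π - y / 2 by ring, cos_pi_div_two_sub, cos_pi_sub, sub_neg_eq_add]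
  have h := ((((hasDerivAt_id' y).const_add x).div_const 4).cos.const_mul 2).sub_const
    (sin (x / 2)) |>.sub ((hasDerivAt_id' y).div_const 2).sin
  exact h.congr_deriv (by linear_combination (1 / 2 : ℝ) * hprod)

lemma div_five_le_sin {θ : ℝ} (h₀ : 0 ≤ θ) (h₁ : θ ≤ 3 * π / 4) : θ / 5 ≤ sin θ := by
  have hπ := pi_gt_three
  have hπ' := pi_lt_d2
  rcases le_or_gt θ (π / 2) with hθ | hθ
  · have := mul_le_sin h₀ hθ
    have : θ / 5 ≤ 2 / π * θ := by
      rw [div_mul_eq_mul_div, le_div_iff₀ (by positivity)]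
      nlinarith
    linarith
  · have := mul_le_sin (x := π - θ) (by linarith) (by linarith)
    rw [sin_pi_sub] at this
    have : 1 / 2 ≤ 2 / π * (π - θ) := by
      rw [div_mul_eq_mul_div, le_div_iff₀ (by positivity)]
      linarith
    linarith

lemma sq_div_le_neg_deriv_fmFactor {x y : ℝ} (hx : 0 ≤ x) (hy₀ : 0 ≤ y) (hy : y ≤ 2 * π - x) :
    (2 * π - y) ^ 2 / 800 ≤ sin ((6 * π - 3 * y - x) / 8) * sin ((2 * π - y + x) / 8) := by
  have h₁ := div_five_le_sin (θ := (6 * π - 3 * y - x) / 8) (by linarith) (by linarith)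
  have h₂ := div_five_le_sin (θ := (2 * π - y + x) / 8) (by linarith) (by linarith)
  calc (2 * π - y) ^ 2 / 800 = (2 * π - y) / 20 * ((2 * π - y) / 40) := by ring
    _ ≤ _ := mul_le_mul (by linarith) (by linarith) (by linarith) (by linarith)

lemma antitoneOn_fmFactor_sub_cube {x : ℝ} (hx : 0 ≤ x) :
    AntitoneOn (fun y => fmFactor x y - (2 * π - y) ^ 3 / 2400) (Icc 0 (2 * π - x)) := by
  have hderiv : ∀ y, HasDerivAt (fun y => fmFactor x y - (2 * π - y) ^ 3 / 2400)
      (-(sin ((6 * π - 3 * y - x) / 8) * sin ((2 * π - y + x) / 8)) + (2 * π - y) ^ 2 / 800)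
      y := fun y =>
    ((hasDerivAt_fmFactor x y).sub
      ((((hasDerivAt_id' y).const_sub (2 * π)).pow 3).div_const 2400)).congr_deriv (by ring)
  refine antitoneOn_of_hasDerivWithinAt_nonpos (convex_Icc _ _)
    (continuous_iff_continuousAt.2 fun y => (hderiv y).continuousAt).continuousOn
    (fun y _ => (hderiv y).hasDerivWithinAt) fun y hy => ?_
  rw [interior_Icc] at hy
  linarith [sq_div_le_neg_deriv_fmFactor hx hy.1.le hy.2.le]

lemma antitoneOn_fmFactor {x : ℝ} (hx : 0 ≤ x) : AntitoneOn (fmFactor x) (Icc 0 (2 * π - x)) :=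
  fun a ha b hb hab => by
    have := antitoneOn_fmFactor_sub_cube hx ha hb hab
    have : (2 * π - b) ^ 3 ≤ (2 * π - a) ^ 3 := by gcongr; linarith [hb.2]
    linarith

lemma mul_sq_div_le_fmFactor_sub {x a b : ℝ} (hx : 0 ≤ x) (ha : 0 ≤ a) (hab : a ≤ b)
    (hb : b ≤ 2 * π - x) : (b - a) * (2 * π - a) ^ 2 / 2400 ≤ fmFactor x a - fmFactor x b := by
  have h := antitoneOn_fmFactor_sub_cube hx ⟨ha, hab.trans hb⟩ ⟨ha.trans hab, hb⟩ hab
  have hcube : (b - a) * (2 * π - a) ^ 2 ≤ (2 * π - a) ^ 3 - (2 * π - b) ^ 3 := by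
    have : 0 ≤ 2 * π - b := by linarith
    have : 0 ≤ 4 * π - a - b := by linarith
    nlinarith [mul_nonneg (sub_nonneg.2 hab) (mul_nonneg ‹0 ≤ 2 * π - b› this)]
  simp only at h
  linarith

lemma fmFactor_nonpos_of_two_pi_sub_le {x y : ℝ} (hx : x ∈ Icc 0 (2 * π))
    (hy : y ∈ Icc (2 * π - x) (2 * π)) : fmFactor x y ≤ 0 := by
  have hcos : cos ((x + y) / 4) ≤ 0 :=
    cos_nonpos_of_pi_div_two_le_of_le (by linarith [hy.1]) (by linarith [hx.2, hy.2, pi_pos])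
  have hsinx : 0 ≤ sin (x / 2) :=
    sin_nonneg_of_nonneg_of_le_pi (by linarith [hx.1]) (by linarith [hx.2])
  have hsiny : 0 ≤ sin (y / 2) :=
    sin_nonneg_of_nonneg_of_le_pi (by linarith [hy.1, hx.2]) (by linarith [hy.2])
  unfold fmFactor
  linarith

lemma fmFactor_zero_pos {x : ℝ} (hx : x ∈ Ioo (-(2 * π)) (2 * π)) : 0 < fmFactor x 0 := by
  have hcos : 0 < cos (x / 4) := cos_pos_of_mem_Ioo ⟨by linarith [hx.1], by linarith [hx.2]⟩
  have hsin : sin (x / 4) < 1 := by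
    nlinarith [sin_sq_add_cos_sq (x / 4), sin_le_one (x / 4)]
  have : fmFactor x 0 = 2 * cos (x / 4) * (1 - sin (x / 4)) := by
    rw [fmFactor, add_zero, zero_div, sin_zero, show x / 2 = 2 * (x / 4) by ring, sin_two_mul]
    ring
  rw [this]
  have : 0 < 1 - sin (x / 4) := by linarith
  positivity

lemma fmFactor_two_pi_sub_self (x : ℝ) : fmFactor x (2 * π - x) = -(2 * sin (x / 2)) := by
  rw [fmFactor, show (x + (2 * π - x)) / 4 = π / 2 by ring, cos_pi_div_two,
    show (2 * π - x) / 2 = π - x / 2 by ring, sin_pi_sub]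
  ring

lemma exists_fmFactor_eq_zero {x : ℝ} (hx : x ∈ Ioo 0 (2 * π)) :
    ∃ y ∈ Ioo 0 (2 * π - x), fmFactor x y = 0 := by
  have hsin : 0 < sin (x / 2) :=
    sin_pos_of_pos_of_lt_pi (by linarith [hx.1]) (by linarith [hx.2])
  have hcont : Continuous (fmFactor x) := by unfold fmFactor; fun_prop
  exact intermediate_value_Ioo' (by linarith [hx.2]) hcont.continuousOn
    ⟨by rw [fmFactor_two_pi_sub_self]; linarith,
      fmFactor_zero_pos ⟨by linarith [hx.1, pi_pos], hx.2⟩⟩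

lemma fmFactor_nonpos_of_le {x y₁ y : ℝ} (hx : x ∈ Icc 0 (2 * π))
    (hy₁ : y₁ ∈ Icc 0 (2 * π - x)) (hP : fmFactor x y₁ = 0) (hy : y ∈ Icc y₁ (2 * π)) :
    fmFactor x y ≤ 0 := by
  rcases le_total y (2 * π - x) with h | h
  · exact hP ▸ antitoneOn_fmFactor hx.1 hy₁ ⟨hy₁.1.trans hy.1, h⟩ hy.1
  · exact fmFactor_nonpos_of_two_pi_sub_le hx ⟨h, hy.2⟩

lemma sin_half_le_cube_of_fmFactor_eq_zero {x y : ℝ} (hx : 0 ≤ x) (hy : y ∈ Icc 0 (2 * π - x))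
    (hP : fmFactor x y = 0) : sin (x / 2) ≤ (2 * π - y) ^ 3 / 64 := by
  set s := 2 * π - y with hs
  have hrel : sin (x / 2) = 2 * sin ((s - x) / 4) - sin (s / 2) := by
    rw [fmFactor, show (x + y) / 4 = π / 2 - (s - x) / 4 by rw [hs]; ring, cos_pi_div_two_sub,
      show y / 2 = π - s / 2 by rw [hs]; ring, sin_pi_sub] at hP
    linarith
  have hmono : sin ((s - x) / 4) ≤ sin (s / 4) :=
    sin_le_sin_of_le_of_le_pi_div_two (by linarith [hy.2, pi_pos]) (by linarith [hy.1])
      (by linarith)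
  have hsin4 : sin (s / 4) ≤ s / 4 := sin_le (by linarith [hy.2])
  have hsin4' : 0 ≤ sin (s / 4) :=
    sin_nonneg_of_nonneg_of_le_pi (by linarith [hy.2]) (by linarith [hy.1, pi_pos])
  have hcos : 1 - (s / 4) ^ 2 / 2 ≤ cos (s / 4) := one_sub_sq_div_two_le_cos
  have hcos' : cos (s / 4) ≤ 1 := cos_le_one _
  have hdouble : sin (s / 2) = 2 * sin (s / 4) * cos (s / 4) := by
    rw [← sin_two_mul]; ring_nf
  calc sin (x / 2) ≤ 2 * sin (s / 4) * (1 - cos (s / 4)) := by rw [hrel, hdouble]; linarith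
    _ ≤ 2 * (s / 4) * ((s / 4) ^ 2 / 2) := by gcongr <;> linarith
    _ = s ^ 3 / 64 := by ring

lemma Fm_ge_of_fmFactor_eq_zero {x y₁ y : ℝ} (hx : x ∈ Icc 0 (2 * π)) (hy₁ : y₁ ≤ 2 * π - x)
    (hP : fmFactor x y₁ = 0) (hy : y ∈ Icc 0 y₁) :
    1 / 200 * (y₁ - y) * sin (x / 2) ≤ Fm x y := by
  set S := 2 * π - y with hS
  have hδ : 0 ≤ y₁ - y := by linarith [hy.2]
  have hPy : (y₁ - y) * S ^ 2 / 2400 ≤ fmFactor x y := by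
    simpa [hP] using mul_sq_div_le_fmFactor_sub hx.1 hy.1 hy.2 hy₁
  have hsinx : 0 ≤ sin (x / 2) :=
    sin_nonneg_of_nonneg_of_le_pi (by linarith [hx.1]) (by linarith [hx.2])
  have hsiny : 0 ≤ sin (y / 2) :=
    sin_nonneg_of_nonneg_of_le_pi (by linarith [hy.1]) (by linarith [hy.2, hx.1])
  have hkey : 6 * sin (x / 2) ≤ S ^ 2 * (sin (x / 2) + sin (y / 2)) := by
    rcases le_total π S with hπS | hSπ
    · have : 9 ≤ S ^ 2 := by nlinarith [pi_gt_three]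
      nlinarith [mul_nonneg (sq_nonneg S) hsiny]
    · have hcube := sin_half_le_cube_of_fmFactor_eq_zero hx.1 ⟨hy.1.trans hy.2, hy₁⟩ hP
      have hsinS : S / 10 ≤ sin (y / 2) := by
        have := div_five_le_sin (θ := S / 2) (by linarith [hy.2, hx.1]) (by linarith [pi_pos])
        rw [show y / 2 = π - S / 2 by ring, sin_pi_sub]
        linarith
      have : (2 * π - y₁) ^ 3 ≤ S ^ 3 := by gcongr <;> linarith [hy.2, hx.1]
      nlinarith [mul_le_mul_of_nonneg_left hsinS (sq_nonneg S), mul_nonneg (sq_nonneg S) hsinx]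
  calc 1 / 200 * (y₁ - y) * sin (x / 2) = (y₁ - y) / 1200 * (6 * sin (x / 2)) := by ring
    _ ≤ (y₁ - y) / 1200 * (S ^ 2 * (sin (x / 2) + sin (y / 2))) := by gcongr
    _ = 2 * ((y₁ - y) * S ^ 2 / 2400) * (sin (x / 2) + sin (y / 2)) := by ring
    _ ≤ 2 * fmFactor x y * (sin (x / 2) + sin (y / 2)) := by gcongr
    _ ≤ fmFactor x y * (fmFactor x y + 2 * (sin (x / 2) + sin (y / 2))) := by
      nlinarith [sq_nonneg (fmFactor x y)]
    _ = Fm x y := (Fm_eq_fmFactor_mul x y).symm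

/-- **Lemma 4.2.**  For every `x ∈ (0,2π)` there are `0 < y₁ < 2π−x < y₂ < 2π` with
`F₋(x,·) ≤ 0` on `[y₁,y₂]`, `F₋(x,y) ≥ C (y₁−y) sin(x/2)` for `0 ≤ y < y₁`, and
`F₋(x,y) ≥ C (y−y₂) sin(x/2)` for `y₂ < y ≤ 2π`, with a constant `C > 0` independent of
`x` and `y`. -/
theorem Fminus_structure :
    ∃ C > (0 : ℝ), ∀ x ∈ Set.Ioo (0 : ℝ) (2 * π),
      ∃ y₁ y₂ : ℝ,
        0 < y₁ ∧ y₁ < 2 * π - x ∧ 2 * π - x < y₂ ∧ y₂ < 2 * π ∧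
        (∀ y ∈ Set.Icc y₁ y₂, Fm x y ≤ 0) ∧
        (∀ y ∈ Set.Ico (0 : ℝ) y₁, C * (y₁ - y) * Real.sin (x / 2) ≤ Fm x y) ∧
        (∀ y ∈ Set.Ioc y₂ (2 * π), C * (y - y₂) * Real.sin (x / 2) ≤ Fm x y) := by
  refine ⟨1 / 200, by norm_num, fun x hx => ?_⟩
  have hx' : 2 * π - x ∈ Ioo 0 (2 * π) := ⟨by linarith [hx.2], by linarith [hx.1]⟩
  obtain ⟨y₁, hy₁, hP₁⟩ := exists_fmFactor_eq_zero hx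
  obtain ⟨z, hz, hP₂⟩ := exists_fmFactor_eq_zero hx'
  rw [sub_sub_cancel] at hz
  refine ⟨y₁, 2 * π - z, hy₁.1, hy₁.2, by linarith [hz.2], by linarith [hz.1], ?_, ?_, ?_⟩
  · rintro y ⟨hy₁y, hyz⟩
    have h₁ := fmFactor_nonpos_of_le (Ioo_subset_Icc_self hx) (Ioo_subset_Icc_self hy₁) hP₁
      ⟨hy₁y, by linarith [hz.1]⟩
    have h₂ := fmFactor_nonpos_of_le (y := 2 * π - y) (Ioo_subset_Icc_self hx')
      ⟨hz.1.le, by linarith [hz.2]⟩ hP₂ ⟨by linarith, by linarith [hy₁.1]⟩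
    rw [Fm_eq_neg_fmFactor_mul_fmFactor_two_pi_sub]
    nlinarith
  · exact fun y hy => Fm_ge_of_fmFactor_eq_zero (Ioo_subset_Icc_self hx) hy₁.2.le hP₁
      ⟨hy.1, hy.2.le⟩
  · rintro y ⟨hzy, hy⟩
    have := Fm_ge_of_fmFactor_eq_zero (y := 2 * π - y) (Ioo_subset_Icc_self hx')
      (by linarith [hz.2]) hP₂ ⟨by linarith, by linarith⟩
    rwa [Fm_two_pi_sub, show (2 * π - x) / 2 = π - x / 2 by ring, sin_pi_sub,
      show z - (2 * π - y) = y - (2 * π - z) by ring] at this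
end
end

section
/- There exists C > 0 such that for all 0 < λ < 1, ∫₀^{2π} [sin(x/2)/(W(x) + λ)] · (sin(x/2))^{−1/2} dx ≤ C λ^{−1/10}. -/
open MeasureTheory Real Set Filter
open scoped Topology ENNReal ComplexConjugate

noncomputable section

/-!
For `x ∈ (0, 2π)` put `s = sin (x/2)` and `σ = s^(1/3)`. For `y` at distance `2u`, `u ∈ [σ, 2σ]`,
from the endpoint of `I` where `cos (y/2)` has the sign opposite to `cos (x/2)`, one has
`F₊(x,y) = (|cos (x/2)| - cos u)² + 4 s sin u ≤ 25 σ⁴`; this gives `V(x) ≥ 4/(5σ)`, hence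
`W(x) ≥ (4/5) s^(5/3)`. With `δ = λ^(3/5)` the integrand `s^(1/2)/(W + λ)` is then at most
`δ^(-7/6)` when `s ≤ δ` and `≲ s^(-7/6)` otherwise, i.e. `≲ (s + δ)^(-7/6)`. By Jordan's inequality
`s ≥ min(x, 2π - x)/π`, and `∫₀ (t + δ)^(-7/6) dt ≤ 6 δ^(-1/6) = 6 λ^(-1/10)`.
-/

lemma sin_half_pos {x : ℝ} (hx : x ∈ Ioo 0 (2 * π)) : 0 < sin (x / 2) :=
  sin_pos_of_pos_of_lt_pi (by linarith [hx.1]) (by linarith [hx.2])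

lemma Fp_pos {x y : ℝ} (hx : x ∈ Ioo 0 (2 * π)) (hy : y ∈ Icc 0 (2 * π)) : 0 < Fp x y := by
  have hsx := sin_half_pos hx
  have hsy : 0 ≤ sin (y / 2) :=
    sin_nonneg_of_nonneg_of_le_pi (by linarith [hy.1]) (by linarith [hy.2])
  rcases hsy.eq_or_lt with hsy0 | hsy0
  · -- `y ∈ {0, 2π}`, so `cos (y/2) = ±1`, while `|cos (x/2)| < 1`
    have hcy : cos (y / 2) ^ 2 = 1 := by nlinarith [sin_sq_add_cos_sq (y / 2)]
    have hcx : cos (x / 2) ^ 2 < 1 := by nlinarith [sin_sq_add_cos_sq (x / 2)]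
    have : 0 < (cos (x / 2) + cos (y / 2)) ^ 2 := by
      refine (sq_nonneg _).lt_of_ne fun h => ?_
      have : cos (x / 2) = -cos (y / 2) := by
        linarith [pow_eq_zero_iff two_ne_zero |>.1 h.symm]
      rw [this, neg_sq] at hcx
      linarith
    unfold Fp; rw [← hsy0]; linarith
  · unfold Fp; nlinarith [sq_nonneg (cos (x / 2) + cos (y / 2)), mul_pos hsx hsy0]

lemma K2_nonneg (x y : ℝ) : 0 ≤ K2 x y := by
  unfold K2; positivity

lemma continuousOn_K2 {x : ℝ} (hx : x ∈ Ioo 0 (2 * π)) :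
    ContinuousOn (K2 x) (Icc 0 (2 * π)) := by
  have hFp : Continuous (Fp x) := by unfold Fp; fun_prop
  refine continuousOn_const.div (hFp.sqrt.continuousOn) fun y hy => ?_
  exact (sqrt_pos.2 (Fp_pos hx hy)).ne'

lemma integrableOn_K2 {x : ℝ} (hx : x ∈ Ioo 0 (2 * π)) : IntegrableOn (K2 x) II :=
  (continuousOn_K2 hx).integrableOn_Icc.mono_set Ico_subset_Icc_self

lemma le_VV_of_Fp_le {x a b M : ℝ} (hx : x ∈ Ioo 0 (2 * π)) (ha : 0 ≤ a) (hab : a ≤ b)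
    (hb : b < 2 * π) (hM : 0 < M) (hF : ∀ y ∈ Icc a b, Fp x y ≤ M ^ 2) :
    2 / M * (b - a) ≤ VV x := by
  have hsub : Icc a b ⊆ II := Icc_subset_Ico ha hb
  have hK : ∀ y ∈ Icc a b, 2 / M ≤ K2 x y := fun y hy => by
    have hpos := Fp_pos hx ⟨ha.trans hy.1, hy.2.trans hb.le⟩
    unfold K2
    gcongr
    exact (sqrt_le_sqrt (hF y hy)).trans_eq (sqrt_sq hM.le)
  calc 2 / M * (b - a) ≤ ∫ y in Icc a b, K2 x y := by
        have := setIntegral_ge_of_const_le_real measurableSet_Icc (by simp) hK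
          ((integrableOn_K2 hx).mono_set hsub)
        rw [Real.volume_real_Icc_of_le hab] at this
        linarith
    _ ≤ VV x := setIntegral_mono_set (integrableOn_K2 hx)
        (ae_of_all _ (K2_nonneg x)) hsub.eventuallyLE

lemma sq_abs_cos_sub_cos_le {a u : ℝ} (h : |sin a| ≤ u) : (|cos a| - cos u) ^ 2 ≤ u ^ 4 := by
  have hsin : sin a ^ 2 ≤ u ^ 2 := by rw [← sq_abs]; exact pow_le_pow_left₀ (abs_nonneg _) h 2
  have hcos : cos a ^ 2 ≤ |cos a| := by
    rw [← sq_abs]; nlinarith [abs_nonneg (cos a), abs_cos_le_one a]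
  have hlow : -u ^ 2 ≤ |cos a| - cos u := by
    nlinarith [sin_sq_add_cos_sq a, cos_le_one u]
  have hup : |cos a| - cos u ≤ u ^ 2 := by
    nlinarith [abs_cos_le_one a, one_sub_sq_div_two_le_cos (x := u), sq_nonneg u]
  simpa [← pow_mul] using sq_le_sq' hlow hup

lemma Fp_two_pi_sub (x u : ℝ) :
    Fp x (2 * π - 2 * u) = (cos (x / 2) - cos u) ^ 2 + 4 * sin (x / 2) * sin u := by
  rw [Fp, show (2 * π - 2 * u) / 2 = π - u by ring, cos_pi_sub, sin_pi_sub]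
  ring

lemma Fp_two_mul (x u : ℝ) :
    Fp x (2 * u) = (cos (x / 2) + cos u) ^ 2 + 4 * sin (x / 2) * sin u := by
  rw [Fp, mul_div_cancel_left₀ u two_ne_zero]

lemma sin_half_rpow_le_VV {x : ℝ} (hx : x ∈ Ioo 0 (2 * π)) :
    4 / 5 * sin (x / 2) ^ (-(1 / 3 : ℝ)) ≤ VV x := by
  have hπ := pi_gt_three
  set s := sin (x / 2)
  have hs : 0 < s := sin_half_pos hx
  set σ := s ^ (1 / 3 : ℝ)
  have hσ : 0 < σ := rpow_pos_of_pos hs _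
  have hσ1 : σ ≤ 1 := rpow_le_one hs.le (sin_le_one _) (by norm_num)
  have hσ3 : σ ^ 3 = s := by
    rw [← rpow_natCast, ← rpow_mul hs.le]; norm_num
  have hsσ : s ≤ σ := by rw [← hσ3]; nlinarith [mul_pos hσ hσ]
  have hnear : ∀ u ∈ Icc σ (2 * σ),
      (|cos (x / 2)| - cos u) ^ 2 + 4 * s * sin u ≤ (5 * σ ^ 2) ^ 2 := fun u hu => by
    have h1 := sq_abs_cos_sub_cos_le (a := x / 2) (u := u) (by rw [abs_of_pos hs]; linarith [hu.1])
    have h2 : sin u ≤ 2 * σ := (sin_le (by linarith [hu.1])).trans hu.2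
    have h3 : u ^ 4 ≤ (2 * σ) ^ 4 := pow_le_pow_left₀ (by linarith [hu.1]) hu.2 4
    rw [← hσ3]
    nlinarith [pow_pos hσ 3, pow_pos hσ 4]
  have hval : 2 / (5 * σ ^ 2) * (2 * σ) = 4 / 5 * s ^ (-(1 / 3 : ℝ)) := by
    rw [rpow_neg hs.le]; field_simp; ring
  rw [← hval]
  rcases le_total 0 (cos (x / 2)) with hc | hc
  · refine (le_VV_of_Fp_le hx (a := 2 * π - 4 * σ) (b := 2 * π - 2 * σ) (M := 5 * σ ^ 2)
      (by linarith) (by linarith) (by linarith) (by positivity) fun y hy => ?_).trans_eq' (by ring)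
    have := hnear (π - y / 2) ⟨by linarith [hy.2], by linarith [hy.1]⟩
    rwa [abs_of_nonneg hc, ← Fp_two_pi_sub, show 2 * π - 2 * (π - y / 2) = y by ring] at this
  · refine (le_VV_of_Fp_le hx (a := 2 * σ) (b := 4 * σ) (M := 5 * σ ^ 2) (by linarith)
      (by linarith) (by linarith) (by positivity) fun y hy => ?_).trans_eq' (by ring)
    have := hnear (y / 2) ⟨by linarith [hy.1], by linarith [hy.2]⟩
    rwa [abs_of_nonpos hc, ← neg_add', neg_sq, ← Fp_two_mul, mul_div_cancel₀ y two_ne_zero] at this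

lemma sin_half_rpow_le_WW {x : ℝ} (hx : x ∈ Ioo 0 (2 * π)) :
    4 / 5 * sin (x / 2) ^ (5 / 3 : ℝ) ≤ WW x := by
  calc 4 / 5 * sin (x / 2) ^ (5 / 3 : ℝ)
      = sin (x / 2) ^ 2 * (4 / 5 * sin (x / 2) ^ (-(1 / 3 : ℝ))) := by
        rw [mul_left_comm, ← rpow_natCast, ← rpow_add (sin_half_pos hx)]; norm_num
    _ ≤ WW x := mul_le_mul_of_nonneg_left (sin_half_rpow_le_VV hx) (sq_nonneg _)

lemma rpow_div_add_rpow_le {a b c s w δ : ℝ} (ha : 0 ≤ a) (hab : a ≤ b) (hc : 0 < c) (hc1 : c ≤ 1)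
    (hs : 0 < s) (hδ : 0 < δ) (hw : c * s ^ b ≤ w) :
    s ^ a / (w + δ ^ b) ≤ 2 ^ (b - a) / c * (s + δ) ^ (a - b) := by
  have hw0 : 0 ≤ w := (by positivity : 0 ≤ c * s ^ b).trans hw
  have hm : 0 < max s δ := hs.trans_le (le_max_left s δ)
  have hmax : s ^ a / (w + δ ^ b) ≤ max s δ ^ (a - b) / c := by
    rcases le_total s δ with h | h
    · calc s ^ a / (w + δ ^ b) ≤ δ ^ a / δ ^ b := by
            gcongr
            · linarith
          _ = δ ^ (a - b) := (rpow_sub hδ a b).symm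
          _ ≤ max s δ ^ (a - b) / c := by
            rw [max_eq_right h]; exact le_div_self (by positivity) hc hc1
    · calc s ^ a / (w + δ ^ b) ≤ s ^ a / (c * s ^ b) := by
            gcongr
            linarith [rpow_pos_of_pos hδ b]
          _ = max s δ ^ (a - b) / c := by
            rw [max_eq_left h, rpow_sub hs]; field_simp
  have hsum : max s δ ^ (a - b) ≤ 2 ^ (b - a) * (s + δ) ^ (a - b) := by
    have h2m : (2 * max s δ) ^ (a - b) ≤ (s + δ) ^ (a - b) :=
      rpow_le_rpow_of_nonpos (by positivity) (by linarith [le_max_left s δ, le_max_right s δ])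
        (by linarith)
    rw [mul_rpow zero_le_two hm.le] at h2m
    calc max s δ ^ (a - b) = 2 ^ (b - a) * (2 ^ (a - b) * max s δ ^ (a - b)) := by
          rw [← mul_assoc, ← rpow_add two_pos]; simp
      _ ≤ 2 ^ (b - a) * (s + δ) ^ (a - b) := by gcongr
  calc s ^ a / (w + δ ^ b) ≤ max s δ ^ (a - b) / c := hmax
    _ ≤ 2 ^ (b - a) * (s + δ) ^ (a - b) / c := by gcongr
    _ = 2 ^ (b - a) / c * (s + δ) ^ (a - b) := by ring

lemma sin_half_add_rpow_le {x δ r : ℝ} (hx : x ∈ Ioo 0 (2 * π)) (hδ : 0 < δ) (hr : r ≤ 0) :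
    (sin (x / 2) + δ) ^ r ≤ π ^ (-r) * ((x + δ) ^ r + (2 * π - x + δ) ^ r) := by
  have hπ := pi_gt_three
  -- Jordan's inequality, applied at whichever of `x/2`, `π - x/2` lies in `[0, π/2]`
  obtain ⟨t, ht, hts, htsum⟩ : ∃ t, 0 ≤ t ∧ t / π ≤ sin (x / 2) ∧
      (t + δ) ^ r ≤ (x + δ) ^ r + (2 * π - x + δ) ^ r := by
    rcases le_total x π with h | h
    · refine ⟨x, hx.1.le, ?_, le_add_of_nonneg_right (rpow_nonneg (by linarith [hx.2]) _)⟩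
      calc x / π = 2 / π * (x / 2) := by ring
        _ ≤ sin (x / 2) := mul_le_sin (by linarith [hx.1]) (by linarith)
    · refine ⟨2 * π - x, by linarith [hx.2], ?_,
        le_add_of_nonneg_left (rpow_nonneg (by linarith [hx.1]) _)⟩
      calc (2 * π - x) / π = 2 / π * (π - x / 2) := by field_simp
        _ ≤ sin (π - x / 2) := mul_le_sin (by linarith [hx.2]) (by linarith)
        _ = sin (x / 2) := sin_pi_sub _
  have hsδ : (t + δ) / π ≤ sin (x / 2) + δ := by
    rw [add_div]; gcongr; exact div_le_self hδ.le (by linarith)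
  calc (sin (x / 2) + δ) ^ r ≤ ((t + δ) / π) ^ r := rpow_le_rpow_of_nonpos (by positivity) hsδ hr
    _ = π ^ (-r) * (t + δ) ^ r := by
      rw [div_rpow (by positivity) pi_pos.le, rpow_neg pi_pos.le, div_eq_inv_mul]
    _ ≤ π ^ (-r) * ((x + δ) ^ r + (2 * π - x + δ) ^ r) := by gcongr

lemma integral_add_rpow_le {b δ r : ℝ} (hb : 0 ≤ b) (hδ : 0 < δ) (hr : r < -1) :
    ∫ x in (0 : ℝ)..b, (x + δ) ^ r ≤ δ ^ (r + 1) / -(r + 1) := by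
  rw [intervalIntegral.integral_comp_add_right (fun x => x ^ r), zero_add,
    integral_rpow (Or.inr ⟨hr.ne, notMem_uIcc_of_lt hδ (by linarith)⟩)]
  have : 0 ≤ (b + δ) ^ (r + 1) := by positivity
  rw [← neg_div_neg_eq, neg_sub]
  exact div_le_div_of_nonneg_right (by linarith) (by linarith)

lemma intervalIntegrable_add_rpow {b δ r : ℝ} (hb : 0 ≤ b) (hδ : 0 < δ) :
    IntervalIntegrable (fun x => (x + δ) ^ r) volume 0 b :=
  ContinuousOn.intervalIntegrable <| ContinuousOn.rpow_const (by fun_prop) fun x hx =>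
    Or.inl (by linarith [(uIcc_of_le hb ▸ hx).1] : 0 < x + δ).ne'

lemma intervalIntegrable_sub_add_rpow {b δ r : ℝ} (hb : 0 ≤ b) (hδ : 0 < δ) :
    IntervalIntegrable (fun x => (b - x + δ) ^ r) volume 0 b := by
  simpa using ((intervalIntegrable_add_rpow (r := r) hb hδ).comp_sub_left b).symm

lemma integrableOn_add_rpow_add_sub_add_rpow {b δ r : ℝ} (hb : 0 ≤ b) (hδ : 0 < δ) :
    IntegrableOn (fun x => (x + δ) ^ r + (b - x + δ) ^ r) (Ioo 0 b) :=
  ((intervalIntegrable_add_rpow hb hδ).add (intervalIntegrable_sub_add_rpow hb hδ)).1.mono_set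
    Ioo_subset_Ioc_self

lemma setIntegral_add_rpow_add_sub_add_rpow_le {b δ r : ℝ} (hb : 0 ≤ b) (hδ : 0 < δ) (hr : r < -1) :
    ∫ x in Ioo 0 b, ((x + δ) ^ r + (b - x + δ) ^ r) ≤ 2 * (δ ^ (r + 1) / -(r + 1)) := by
  rw [← integral_Ioc_eq_integral_Ioo, ← intervalIntegral.integral_of_le hb,
    intervalIntegral.integral_add (intervalIntegrable_add_rpow hb hδ)
      (intervalIntegrable_sub_add_rpow hb hδ),
    intervalIntegral.integral_comp_sub_left (fun x => (x + δ) ^ r), sub_self, sub_zero]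
  linarith [integral_add_rpow_le hb hδ hr]

lemma resolvent_integrand_nonneg {lam x : ℝ} (hlam : 0 < lam) (hx : x ∈ Ioo 0 (2 * π)) :
    0 ≤ sin (x / 2) / (WW x + lam) * sin (x / 2) ^ (-(1 : ℝ) / 2) := by
  have hs := sin_half_pos hx
  have hW : 0 ≤ WW x :=
    (by positivity : (0 : ℝ) ≤ 4 / 5 * sin (x / 2) ^ (5 / 3 : ℝ)).trans (sin_half_rpow_le_WW hx)
  positivity

lemma resolvent_integrand_le {lam x : ℝ} (hlam : 0 < lam) (hx : x ∈ Ioo 0 (2 * π)) :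
    sin (x / 2) / (WW x + lam) * sin (x / 2) ^ (-(1 : ℝ) / 2) ≤
      2 ^ (7 / 6 : ℝ) / (4 / 5) * π ^ (7 / 6 : ℝ) *
        ((x + lam ^ (3 / 5 : ℝ)) ^ (-(7 / 6) : ℝ) +
          (2 * π - x + lam ^ (3 / 5 : ℝ)) ^ (-(7 / 6) : ℝ)) := by
  have hs := sin_half_pos hx
  have hδ : 0 < lam ^ (3 / 5 : ℝ) := rpow_pos_of_pos hlam _
  have hlam' : lam = (lam ^ (3 / 5 : ℝ)) ^ (5 / 3 : ℝ) := by
    rw [← rpow_mul hlam.le]; norm_num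
  have hpow : sin (x / 2) / (WW x + lam) * sin (x / 2) ^ (-(1 : ℝ) / 2) =
      sin (x / 2) ^ (1 / 2 : ℝ) / (WW x + lam) := by
    rw [div_mul_eq_mul_div, ← rpow_one_add' hs.le (by norm_num)]; norm_num
  have h := rpow_div_add_rpow_le (a := 1 / 2) (b := 5 / 3) (by norm_num) (by norm_num) (by norm_num)
    (by norm_num) hs hδ (sin_half_rpow_le_WW hx)
  have hJ := sin_half_add_rpow_le (r := -(7 / 6)) hx hδ (by norm_num)
  rw [← hlam'] at h
  norm_num at h hJ
  rw [hpow, mul_assoc]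
  exact h.trans (by gcongr)

/-- **Lemma 6.2.**  There is a `C > 0` such that for all `0 < λ < 1`,
`∫₀^{2π} [sin(x/2)/(W(x)+λ)] (sin(x/2))^{−1/2} dx ≤ C λ^{−1/10}`. -/
theorem basic_resolvent_integral_bound :
    ∃ C > (0 : ℝ), ∀ lam ∈ Set.Ioo (0 : ℝ) 1,
      (∫ x in Set.Ioo (0 : ℝ) (2 * π),
          Real.sin (x / 2) / (WW x + lam) * Real.sin (x / 2) ^ (-(1 : ℝ) / 2))
        ≤ C * lam ^ (-(1 : ℝ) / 10) := by
  set K : ℝ := 2 ^ (7 / 6 : ℝ) / (4 / 5) * π ^ (7 / 6 : ℝ)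
  refine ⟨12 * K, by positivity, fun lam hlam => ?_⟩
  have hδ : 0 < lam ^ (3 / 5 : ℝ) := rpow_pos_of_pos hlam.1 _
  calc _ ≤ ∫ x in Ioo 0 (2 * π), K * ((x + lam ^ (3 / 5 : ℝ)) ^ (-(7 / 6) : ℝ) +
          (2 * π - x + lam ^ (3 / 5 : ℝ)) ^ (-(7 / 6) : ℝ)) :=
        integral_mono_of_nonneg
          (ae_restrict_of_forall_mem measurableSet_Ioo fun x hx =>
            resolvent_integrand_nonneg hlam.1 hx)
          ((integrableOn_add_rpow_add_sub_add_rpow (by positivity) hδ).const_mul K)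
          (ae_restrict_of_forall_mem measurableSet_Ioo fun x hx => resolvent_integrand_le hlam.1 hx)
    _ = K * ∫ x in Ioo 0 (2 * π), ((x + lam ^ (3 / 5 : ℝ)) ^ (-(7 / 6) : ℝ) +
          (2 * π - x + lam ^ (3 / 5 : ℝ)) ^ (-(7 / 6) : ℝ)) := integral_const_mul _ _
    _ ≤ K * (2 * ((lam ^ (3 / 5 : ℝ)) ^ (-(7 / 6) + 1 : ℝ) / -(-(7 / 6) + 1 : ℝ))) := by
        gcongr
        exact setIntegral_add_rpow_add_sub_add_rpow_le (by positivity) hδ (by norm_num)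
    _ = 12 * K * lam ^ (-(1 : ℝ) / 10) := by
        rw [← rpow_mul hlam.1.le]; norm_num; ring
end
end

section
/- Let μ be a positive measure on X and A : X × X → ℂ measurable with respect to μ × μ, satisfying A(x,y)* = A(y,x) for (μ×μ)-almost every (x,y). Let φ : X → ℂ be measurable, set B(x,y) = φ(x)* A(x,y) φ(y), and let T be the integral operator with kernel B on L²(μ). Suppose there exists α ∈ ℝ such that C_α = ess sup_x ( |φ(x)|^{2−α} ∫_X |A(x,y)| |φ(y)|^α μ(dy) ) < ∞. Then T is a bounded self-adjoint operator on L²(μ) with ‖T‖ ≤ C_α. -/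
/-!
Schur test with the weight `w = |φ|^{α-1}`. The kernel `|B(x,y)| = |φ(x)| |A(x,y)| |φ(y)|`
satisfies `∫ |B(x,y)| w(y) dy ≤ C_α w(x)` for a.e. `x`, and, `|A|` being symmetric, the same
bound in the other variable. Cauchy–Schwarz applied to the splitting
`|B| = (|B| w)^{1/2} (|B| / w)^{1/2}` and Tonelli then bound `|B|` on `L²(μ)` by `C_α`. So the
integrals defining `T f` converge absolutely a.e., `T` is bounded by `C_α`, and Fubini together
with `B(x,y)* = B(y,x)` gives `⟪g, T f⟫ = ⟪T g, f⟫`.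
-/

open MeasureTheory Function
open scoped ENNReal ComplexConjugate

namespace ENNReal

variable {X : Type*} [MeasurableSpace X] {μ : Measure X}

lemma rpow_inv_two_sq (a : ℝ≥0∞) : (a ^ (2⁻¹ : ℝ)) ^ 2 = a := by
  rw [← rpow_natCast, ← rpow_mul]
  norm_num

theorem lintegral_mul_sq_le {f g : X → ℝ≥0∞} (hf : AEMeasurable f μ) (hg : AEMeasurable g μ) :
    (∫⁻ x, f x * g x ∂μ) ^ 2 ≤ (∫⁻ x, f x ^ 2 ∂μ) * ∫⁻ x, g x ^ 2 ∂μ := by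
  have h := lintegral_mul_le_Lp_mul_Lq μ Real.HolderConjugate.two_two hf hg
  simp only [Pi.mul_apply, rpow_two, one_div] at h
  calc (∫⁻ x, f x * g x ∂μ) ^ 2
      ≤ ((∫⁻ x, f x ^ 2 ∂μ) ^ (2⁻¹ : ℝ) * (∫⁻ x, g x ^ 2 ∂μ) ^ (2⁻¹ : ℝ)) ^ 2 :=
        pow_le_pow_left₀ zero_le h 2
    _ = (∫⁻ x, f x ^ 2 ∂μ) * ∫⁻ x, g x ^ 2 ∂μ := by
        rw [mul_pow, rpow_inv_two_sq, rpow_inv_two_sq]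

theorem lintegral_mul_sq_le_of_weight {K F w : X → ℝ≥0∞} (hK : AEMeasurable K μ)
    (hF : AEMeasurable F μ) (hw : AEMeasurable w μ) (hKw : ∀ y, K y ≠ 0 → w y ≠ 0 ∧ w y ≠ ∞) :
    (∫⁻ y, K y * F y ∂μ) ^ 2 ≤
      (∫⁻ y, K y * w y ∂μ) * ∫⁻ y, K y * ((w y)⁻¹ * F y ^ 2) ∂μ := by
  have hsplit : ∀ y, K y * F y =
      (K y * w y) ^ (2⁻¹ : ℝ) * ((K y * (w y)⁻¹) ^ (2⁻¹ : ℝ) * F y) := by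
    intro y
    rcases eq_or_ne (K y) 0 with h0 | h0
    · simp [h0]
    obtain ⟨hw0, hwtop⟩ := hKw y h0
    rw [← mul_assoc, ← mul_rpow_of_nonneg _ _ (by norm_num),
      show K y * w y * (K y * (w y)⁻¹) = K y ^ (2 : ℝ) by
        rw [rpow_two, sq, mul_mul_mul_comm, ENNReal.mul_inv_cancel hw0 hwtop, mul_one],
      ← rpow_mul]
    norm_num
  calc (∫⁻ y, K y * F y ∂μ) ^ 2
      = (∫⁻ y, (K y * w y) ^ (2⁻¹ : ℝ) * ((K y * (w y)⁻¹) ^ (2⁻¹ : ℝ) * F y) ∂μ) ^ 2 := by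
        simp only [← hsplit]
    _ ≤ _ := lintegral_mul_sq_le (by fun_prop) (by fun_prop)
    _ = (∫⁻ y, K y * w y ∂μ) * ∫⁻ y, K y * ((w y)⁻¹ * F y ^ 2) ∂μ := by
        simp only [mul_pow, rpow_inv_two_sq, mul_assoc]

end ENNReal

section SchurTest

variable {X : Type*} [MeasurableSpace X] {μ : Measure X}

def IsL2BoundedKernel (μ : Measure X) (K : X → X → ℝ≥0∞) (C : ℝ≥0∞) : Prop :=
  ∀ F : X → ℝ≥0∞, AEMeasurable F μ →
    eLpNorm (fun x => ∫⁻ y, K x y * F y ∂μ) 2 μ ≤ C * eLpNorm F 2 μ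

lemma eLpNorm_two_sq {E : Type*} [ENorm E] (f : X → E) :
    eLpNorm f 2 μ ^ 2 = ∫⁻ x, ‖f x‖ₑ ^ 2 ∂μ := by
  simpa using eLpNorm_nnreal_pow_eq_lintegral (μ := μ) (f := f) (p := 2) two_ne_zero

variable [SFinite μ] {K : X → X → ℝ≥0∞}

theorem lintegral_mul_lintegral_kernel_swap (hK : Measurable (uncurry K)) {u v : X → ℝ≥0∞}
    (hu : Measurable u) (hv : AEMeasurable v μ) :
    ∫⁻ x, u x * ∫⁻ y, K x y * v y ∂μ ∂μ = ∫⁻ y, (∫⁻ x, K x y * u x ∂μ) * v y ∂μ := by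
  calc ∫⁻ x, u x * ∫⁻ y, K x y * v y ∂μ ∂μ
      = ∫⁻ x, ∫⁻ y, u x * (K x y * v y) ∂μ ∂μ := lintegral_congr fun x =>
        (lintegral_const_mul'' _ ((hK.comp measurable_prodMk_left).aemeasurable.mul hv)).symm
    _ = ∫⁻ y, ∫⁻ x, u x * (K x y * v y) ∂μ ∂μ := lintegral_lintegral_swap
        ((hu.comp measurable_fst).aemeasurable.mul (hK.aemeasurable.mul hv.comp_snd))
    _ = ∫⁻ y, (∫⁻ x, K x y * u x ∂μ) * v y ∂μ := lintegral_congr fun y => by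
        rw [← lintegral_mul_const (f := fun x => K x y * u x) _
          ((hK.comp measurable_prodMk_right).mul hu)]
        exact lintegral_congr fun x => by ring

theorem lintegral_sq_lintegral_le_of_schur (hK : Measurable (uncurry K)) {w : X → ℝ≥0∞}
    (hw : Measurable w) (hKw : ∀ x y, K x y ≠ 0 → w y ≠ 0 ∧ w y ≠ ∞) {C : ℝ≥0∞}
    (hrow : ∀ᵐ x ∂μ, ∫⁻ y, K x y * w y ∂μ ≤ C * w x)
    (hcol : ∀ᵐ y ∂μ, ∫⁻ x, K x y * w x ∂μ ≤ C * w y) {F : X → ℝ≥0∞} (hF : AEMeasurable F μ) :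
    ∫⁻ x, (∫⁻ y, K x y * F y ∂μ) ^ 2 ∂μ ≤ C ^ 2 * ∫⁻ y, F y ^ 2 ∂μ := by
  set G : X → ℝ≥0∞ := fun y => (w y)⁻¹ * F y ^ 2
  have hG : AEMeasurable G μ := by fun_prop
  calc ∫⁻ x, (∫⁻ y, K x y * F y ∂μ) ^ 2 ∂μ
      ≤ ∫⁻ x, C * (w x * ∫⁻ y, K x y * G y ∂μ) ∂μ := by
        refine lintegral_mono_ae ?_
        filter_upwards [hrow] with x hx
        rw [← mul_assoc]
        exact (ENNReal.lintegral_mul_sq_le_of_weight (hK.comp measurable_prodMk_left).aemeasurable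
          hF hw.aemeasurable (hKw x)).trans (mul_le_mul_left hx _)
    _ = C * ∫⁻ y, (∫⁻ x, K x y * w x ∂μ) * G y ∂μ := by
        rw [lintegral_const_mul'' C (f := fun x => w x * ∫⁻ y, K x y * G y ∂μ)
            (hw.aemeasurable.mul (hK.aemeasurable.mul hG.comp_snd).lintegral_prod_right'),
          lintegral_mul_lintegral_kernel_swap hK hw hG]
    _ ≤ C * ∫⁻ y, C * F y ^ 2 ∂μ := by
        refine mul_le_mul_right (lintegral_mono_ae ?_) C
        filter_upwards [hcol] with y hy
        calc (∫⁻ x, K x y * w x ∂μ) * G y ≤ C * w y * ((w y)⁻¹ * F y ^ 2) := by gcongr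
          _ = C * (w y * (w y)⁻¹) * F y ^ 2 := by ring
          _ ≤ C * 1 * F y ^ 2 := by gcongr; exact ENNReal.mul_inv_le_one _
          _ = C * F y ^ 2 := by rw [mul_one]
    _ = C ^ 2 * ∫⁻ y, F y ^ 2 ∂μ := by
        rw [lintegral_const_mul'' C (hF.pow_const 2), ← mul_assoc, sq]

theorem isL2BoundedKernel_of_schur (hK : Measurable (uncurry K)) {w : X → ℝ≥0∞}
    (hw : Measurable w) (hKw : ∀ x y, K x y ≠ 0 → w y ≠ 0 ∧ w y ≠ ∞) {C : ℝ≥0∞}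
    (hrow : ∀ᵐ x ∂μ, ∫⁻ y, K x y * w y ∂μ ≤ C * w x)
    (hcol : ∀ᵐ y ∂μ, ∫⁻ x, K x y * w x ∂μ ≤ C * w y) : IsL2BoundedKernel μ K C := by
  intro F hF
  rw [← ENNReal.pow_le_pow_left_iff two_ne_zero, mul_pow, eLpNorm_two_sq, eLpNorm_two_sq]
  exact lintegral_sq_lintegral_le_of_schur hK hw hKw hrow hcol hF

theorem ae_lintegral_le_of_ae_symm (hK : ∀ᵐ p ∂μ.prod μ, K p.1 p.2 = K p.2 p.1)
    {w : X → ℝ≥0∞} {C : ℝ≥0∞} (hrow : ∀ᵐ x ∂μ, ∫⁻ y, K x y * w y ∂μ ≤ C * w x) :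
    ∀ᵐ y ∂μ, ∫⁻ x, K x y * w x ∂μ ≤ C * w y := by
  filter_upwards [Measure.ae_ae_of_ae_prod hK, hrow] with y hy hrowy
  refine le_of_eq_of_le (lintegral_congr_ae ?_) hrowy
  filter_upwards [hy] with x hx
  rw [hx]

end SchurTest

section IntegralOperator

variable {X : Type*} [MeasurableSpace X] {μ : Measure X}

lemma ae_ne_top_of_eLpNorm_ne_top {F : X → ℝ≥0∞} (hF : AEMeasurable F μ) {p : ℝ≥0∞}
    (hp0 : p ≠ 0) (hp : p ≠ ∞) (hFp : eLpNorm F p μ ≠ ∞) : ∀ᵐ x ∂μ, F x ≠ ∞ := by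
  rw [← lt_top_iff_ne_top, eLpNorm_lt_top_iff_lintegral_rpow_enorm_lt_top hp0 hp] at hFp
  filter_upwards [ae_lt_top' (hF.pow_const _) hFp.ne] with x hx
  exact fun htop => by simp [htop, ENNReal.toReal_pos hp0 hp] at hx

variable {𝕜 : Type*} [RCLike 𝕜] {k : X → X → 𝕜} {C : ℝ≥0∞}

theorem eLpNorm_lintegral_enorm_kernel_mul_le (hkC : IsL2BoundedKernel μ (fun x y => ‖k x y‖ₑ) C)
    {f : X → 𝕜} (hf : AEStronglyMeasurable f μ) :
    eLpNorm (fun x => ∫⁻ y, ‖k x y‖ₑ * ‖f y‖ₑ ∂μ) 2 μ ≤ C * eLpNorm f 2 μ := by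
  simpa only [eLpNorm_enorm] using hkC _ hf.enorm

theorem ae_integrable_kernel_mul [SFinite μ] (hk : AEStronglyMeasurable (uncurry k) (μ.prod μ))
    (hC : C ≠ ∞) (hkC : IsL2BoundedKernel μ (fun x y => ‖k x y‖ₑ) C) {f : X → 𝕜}
    (hf : MemLp f 2 μ) : ∀ᵐ x ∂μ, Integrable (fun y => k x y * f y) μ := by
  have hprod : AEStronglyMeasurable (fun p : X × X => k p.1 p.2 * f p.2) (μ.prod μ) :=
    hk.mul hf.1.comp_snd
  have hfin : ∀ᵐ x ∂μ, ∫⁻ y, ‖k x y‖ₑ * ‖f y‖ₑ ∂μ ≠ ∞ :=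
    ae_ne_top_of_eLpNorm_ne_top (hk.enorm.mul hf.1.enorm.comp_snd).lintegral_prod_right'
      two_ne_zero ENNReal.ofNat_ne_top
      ((eLpNorm_lintegral_enorm_kernel_mul_le hkC hf.1).trans_lt
        (ENNReal.mul_lt_top hC.lt_top hf.2)).ne
  filter_upwards [hprod.prodMk_left, hfin] with x hmeas hx
  refine ⟨hmeas, ?_⟩
  simpa only [HasFiniteIntegral, enorm_mul] using hx.lt_top

theorem eLpNorm_integral_kernel_mul_le (hkC : IsL2BoundedKernel μ (fun x y => ‖k x y‖ₑ) C)
    {f : X → 𝕜} (hf : AEStronglyMeasurable f μ) :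
    eLpNorm (fun x => ∫ y, k x y * f y ∂μ) 2 μ ≤ C * eLpNorm f 2 μ := by
  refine le_trans (eLpNorm_mono_enorm fun x => ?_) (eLpNorm_lintegral_enorm_kernel_mul_le hkC hf)
  simpa only [enorm_mul, enorm_eq_self] using
    enorm_integral_le_lintegral_enorm (μ := μ) fun y => k x y * f y

theorem memLp_integral_kernel_mul [SFinite μ] (hk : AEStronglyMeasurable (uncurry k) (μ.prod μ))
    (hC : C ≠ ∞) (hkC : IsL2BoundedKernel μ (fun x y => ‖k x y‖ₑ) C) {f : X → 𝕜}
    (hf : MemLp f 2 μ) : MemLp (fun x => ∫ y, k x y * f y ∂μ) 2 μ := by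
  have hprod : AEStronglyMeasurable (fun p : X × X => k p.1 p.2 * f p.2) (μ.prod μ) :=
    hk.mul hf.1.comp_snd
  exact ⟨hprod.integral_prod_right',
    (eLpNorm_integral_kernel_mul_le hkC hf.1).trans_lt (ENNReal.mul_lt_top hC.lt_top hf.2)⟩

theorem exists_integralOperator_L2 [SFinite μ] (hk : AEStronglyMeasurable (uncurry k) (μ.prod μ))
    (hC : C ≠ ∞) (hkC : IsL2BoundedKernel μ (fun x y => ‖k x y‖ₑ) C) :
    ∃ T : Lp 𝕜 2 μ →L[𝕜] Lp 𝕜 2 μ, ‖T‖ ≤ C.toReal ∧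
      ∀ f : Lp 𝕜 2 μ, (T f : X → 𝕜) =ᵐ[μ] fun x => ∫ y, k x y * f y ∂μ := by
  have hmem (f : Lp 𝕜 2 μ) := memLp_integral_kernel_mul hk hC hkC (Lp.memLp f)
  have hint (f : Lp 𝕜 2 μ) := ae_integrable_kernel_mul hk hC hkC (Lp.memLp f)
  let T : Lp 𝕜 2 μ →ₗ[𝕜] Lp 𝕜 2 μ :=
    { toFun f := (hmem f).toLp _
      map_add' f g := by
        apply Lp.ext
        filter_upwards [(hmem (f + g)).coeFn_toLp, Lp.coeFn_add ((hmem f).toLp _) ((hmem g).toLp _),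
          (hmem f).coeFn_toLp, (hmem g).coeFn_toLp, hint f, hint g] with x h1 h2 h3 h4 hf hg
        rw [h1, h2, Pi.add_apply, h3, h4, ← integral_add hf hg]
        refine integral_congr_ae ?_
        filter_upwards [Lp.coeFn_add f g] with y hy
        rw [hy, Pi.add_apply, mul_add]
      map_smul' c f := by
        apply Lp.ext
        filter_upwards [(hmem (c • f)).coeFn_toLp, Lp.coeFn_smul c ((hmem f).toLp _),
          (hmem f).coeFn_toLp] with x h1 h2 h3
        rw [h1, RingHom.id_apply, h2, Pi.smul_apply, h3, smul_eq_mul, ← integral_const_mul]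
        refine integral_congr_ae ?_
        filter_upwards [Lp.coeFn_smul c f] with y hy
        rw [hy, Pi.smul_apply, smul_eq_mul, mul_left_comm] }
  have hbound (f : Lp 𝕜 2 μ) : ‖T f‖ ≤ C.toReal * ‖f‖ := by
    rw [Lp.norm_def, Lp.norm_def, ← ENNReal.toReal_mul]
    refine ENNReal.toReal_mono (ENNReal.mul_ne_top hC (Lp.eLpNorm_ne_top f)) ?_
    exact (eLpNorm_congr_ae (hmem f).coeFn_toLp).trans_le
      (eLpNorm_integral_kernel_mul_le hkC (Lp.aestronglyMeasurable f))
  exact ⟨T.mkContinuous C.toReal hbound,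
    LinearMap.mkContinuous_norm_le _ ENNReal.toReal_nonneg hbound, fun f => (hmem f).coeFn_toLp⟩

theorem integrable_conj_mul_kernel_mul [SFinite μ]
    (hk : AEStronglyMeasurable (uncurry k) (μ.prod μ)) (hC : C ≠ ∞)
    (hkC : IsL2BoundedKernel μ (fun x y => ‖k x y‖ₑ) C) {f g : X → 𝕜} (hf : MemLp f 2 μ)
    (hg : MemLp g 2 μ) :
    Integrable (fun p : X × X => conj (g p.1) * k p.1 p.2 * f p.2) (μ.prod μ) := by
  have hmeas : AEStronglyMeasurable (fun p : X × X => conj (g p.1) * k p.1 p.2 * f p.2)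
      (μ.prod μ) := (hg.1.star.comp_fst.mul hk).mul hf.1.comp_snd
  set R : X → ℝ≥0∞ := fun x => ∫⁻ y, ‖k x y‖ₑ * ‖f y‖ₑ ∂μ
  have hR : AEMeasurable R μ := (hk.enorm.mul hf.1.enorm.comp_snd).lintegral_prod_right'
  have hcs : (∫⁻ x, ‖g x‖ₑ * R x ∂μ) ^ 2 ≤ eLpNorm g 2 μ ^ 2 * eLpNorm R 2 μ ^ 2 := by
    simpa only [eLpNorm_two_sq, enorm_eq_self] using ENNReal.lintegral_mul_sq_le hg.1.enorm hR
  have hRfin : eLpNorm R 2 μ < ∞ :=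
    (eLpNorm_lintegral_enorm_kernel_mul_le hkC hf.1).trans_lt (ENNReal.mul_lt_top hC.lt_top hf.2)
  refine ⟨hmeas, ?_⟩
  calc ∫⁻ p, ‖conj (g p.1) * k p.1 p.2 * f p.2‖ₑ ∂μ.prod μ = ∫⁻ x, ‖g x‖ₑ * R x ∂μ := by
        rw [lintegral_prod _ hmeas.enorm]
        refine lintegral_congr fun x => ?_
        simp only [R, ← lintegral_const_mul' _ _ enorm_ne_top, enorm_mul, RCLike.enorm_conj,
          mul_assoc]
    _ < ∞ := (ENNReal.pow_lt_top_iff.mp (hcs.trans_lt (ENNReal.mul_lt_top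
        (ENNReal.pow_lt_top hg.2) (ENNReal.pow_lt_top hRfin)))).resolve_right two_ne_zero

theorem inner_eq_integral_integral_kernel {T : Lp 𝕜 2 μ →L[𝕜] Lp 𝕜 2 μ}
    (hT : ∀ f : Lp 𝕜 2 μ, (T f : X → 𝕜) =ᵐ[μ] fun x => ∫ y, k x y * f y ∂μ) (f g : Lp 𝕜 2 μ) :
    inner 𝕜 g (T f) = ∫ x, ∫ y, conj (g x) * k x y * f y ∂μ ∂μ := by
  rw [L2.inner_def]
  refine integral_congr_ae ?_
  filter_upwards [hT f] with x hx
  simp only [RCLike.inner_apply, hx, mul_comm _ (conj _), ← integral_const_mul, mul_assoc]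

theorem isSelfAdjoint_of_ae_eq_integral_kernel [SFinite μ]
    (hk : AEStronglyMeasurable (uncurry k) (μ.prod μ)) (hC : C ≠ ∞)
    (hkC : IsL2BoundedKernel μ (fun x y => ‖k x y‖ₑ) C)
    (hsym : ∀ᵐ p ∂μ.prod μ, conj (k p.1 p.2) = k p.2 p.1) {T : Lp 𝕜 2 μ →L[𝕜] Lp 𝕜 2 μ}
    (hT : ∀ f : Lp 𝕜 2 μ, (T f : X → 𝕜) =ᵐ[μ] fun x => ∫ y, k x y * f y ∂μ) :
    IsSelfAdjoint T := by
  rw [ContinuousLinearMap.isSelfAdjoint_iff_isSymmetric]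
  intro f g
  simp only [ContinuousLinearMap.coe_coe]
  rw [← inner_conj_symm (T f) g, inner_eq_integral_integral_kernel hT,
    inner_eq_integral_integral_kernel hT,
    integral_integral_swap (integrable_conj_mul_kernel_mul hk hC hkC (Lp.memLp f) (Lp.memLp g)),
    ← integral_conj]
  refine integral_congr_ae ?_
  filter_upwards [Measure.ae_ae_of_ae_prod hsym] with x hx
  rw [← integral_conj]
  refine integral_congr_ae ?_
  filter_upwards [hx] with y hy
  simp only [map_mul, RCLike.conj_conj, ← hy]
  ring

end IntegralOperator

-- Not an equality at `t = 0, α = 0`, where `0 ^ 0 = 1`.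
lemma Real.mul_rpow_sub_one_le {t : ℝ} (ht : 0 ≤ t) (α : ℝ) : t * t ^ (α - 1) ≤ t ^ α := by
  rcases ht.eq_or_lt with rfl | ht
  · simpa using Real.rpow_nonneg le_rfl α
  · conv_rhs => rw [show α = 1 + (α - 1) by ring, Real.rpow_add ht, Real.rpow_one]

section SchurWeight

variable {X : Type*} [MeasurableSpace X] {μ : Measure X}

theorem ae_lintegral_enorm_mul_weight_le {E F : Type*} [NormedAddCommGroup E]
    [NormedAddCommGroup F] (A : X → X → E) (φ : X → F) (α : ℝ) :
    ∀ᵐ x ∂μ, ∫⁻ y, ‖φ x‖ₑ * ‖A x y‖ₑ * ‖φ y‖ₑ * ENNReal.ofReal (‖φ y‖ ^ (α - 1)) ∂μ ≤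
      essSup (fun x => ENNReal.ofReal (‖φ x‖ ^ (2 - α)) *
        ∫⁻ y, ENNReal.ofReal (‖A x y‖ * ‖φ y‖ ^ α) ∂μ) μ * ENNReal.ofReal (‖φ x‖ ^ (α - 1)) := by
  filter_upwards [ENNReal.ae_le_essSup _] with x hx
  calc ∫⁻ y, ‖φ x‖ₑ * ‖A x y‖ₑ * ‖φ y‖ₑ * ENNReal.ofReal (‖φ y‖ ^ (α - 1)) ∂μ
      ≤ ∫⁻ y, ENNReal.ofReal ‖φ x‖ * ENNReal.ofReal (‖A x y‖ * ‖φ y‖ ^ α) ∂μ := by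
        refine lintegral_mono fun y => ?_
        simp only [← ofReal_norm]
        rw [← ENNReal.ofReal_mul (norm_nonneg _), ← ENNReal.ofReal_mul (by positivity),
          ← ENNReal.ofReal_mul (by positivity), ← ENNReal.ofReal_mul (norm_nonneg _)]
        refine ENNReal.ofReal_le_ofReal ?_
        rw [mul_assoc, mul_assoc]
        gcongr
        exact Real.mul_rpow_sub_one_le (norm_nonneg _) α
    _ = ENNReal.ofReal ‖φ x‖ * ∫⁻ y, ENNReal.ofReal (‖A x y‖ * ‖φ y‖ ^ α) ∂μ :=
        lintegral_const_mul' _ _ ENNReal.ofReal_ne_top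
    _ = ENNReal.ofReal (‖φ x‖ ^ (α - 1)) * (ENNReal.ofReal (‖φ x‖ ^ (2 - α)) *
          ∫⁻ y, ENNReal.ofReal (‖A x y‖ * ‖φ y‖ ^ α) ∂μ) := by
        rw [← mul_assoc, ← ENNReal.ofReal_mul (by positivity),
          ← Real.rpow_add' (norm_nonneg _) (by norm_num), show α - 1 + (2 - α) = 1 by ring,
          Real.rpow_one]
    _ ≤ _ := by
        rw [mul_comm _ (ENNReal.ofReal _)]
        exact mul_le_mul_right hx _

end SchurWeight

/-- **Proposition A.1 (Schur-type bound).**  Let `μ` be a (σ-finite) positive measure on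
`X`, `A : X × X → ℂ` measurable with `A(x,y)* = A(y,x)` a.e., `φ : X → ℂ` measurable, and
`B(x,y) = φ(x)* A(x,y) φ(y)`.  If for some `α ∈ ℝ` the quantity
`C_α = ess sup_x (|φ(x)|^{2−α} ∫ |A(x,y)| |φ(y)|^α μ(dy))` is finite (with the conventions
`0·∞ = 0`, `0⁰ = 1`), then the integral operator `T` with kernel `B` is a bounded
self-adjoint operator on `L²(μ)` with `‖T‖ ≤ C_α`. -/
theorem schur_type_integral_operator_bound
    {X : Type*} [MeasurableSpace X] (μ : Measure X) [SigmaFinite μ]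
    (A : X → X → ℂ) (hA : Measurable fun p : X × X => A p.1 p.2)
    (hsym : ∀ᵐ p ∂(μ.prod μ), (starRingEnd ℂ) (A p.1 p.2) = A p.2 p.1)
    (φ : X → ℂ) (hφ : Measurable φ) (α : ℝ)
    (hfin :
      essSup
        (fun x => ENNReal.ofReal (‖φ x‖ ^ (2 - α)) *
          ∫⁻ y, ENNReal.ofReal (‖A x y‖ * ‖φ y‖ ^ α) ∂μ) μ ≠ ⊤) :
    ∃ T : Lp ℂ 2 μ →L[ℂ] Lp ℂ 2 μ,
      IsSelfAdjoint T ∧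
      ‖T‖ ≤
        (essSup
          (fun x => ENNReal.ofReal (‖φ x‖ ^ (2 - α)) *
            ∫⁻ y, ENNReal.ofReal (‖A x y‖ * ‖φ y‖ ^ α) ∂μ) μ).toReal ∧
      ∀ f : Lp ℂ 2 μ,
        (T f : X → ℂ) =ᵐ[μ]
          fun x => ∫ y, (starRingEnd ℂ) (φ x) * A x y * φ y * f y ∂μ := by
  set C := essSup (fun x => ENNReal.ofReal (‖φ x‖ ^ (2 - α)) *
    ∫⁻ y, ENNReal.ofReal (‖A x y‖ * ‖φ y‖ ^ α) ∂μ) μ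
  set k : X → X → ℂ := fun x y => conj (φ x) * A x y * φ y
  set w : X → ℝ≥0∞ := fun y => ENNReal.ofReal (‖φ y‖ ^ (α - 1))
  have hk : Measurable (uncurry k) := by
    change Measurable fun p : X × X => conj (φ p.1) * A p.1 p.2 * φ p.2
    fun_prop
  have hkK (x y : X) : ‖k x y‖ₑ = ‖φ x‖ₑ * ‖A x y‖ₑ * ‖φ y‖ₑ := by
    simp only [k, enorm_mul, RCLike.enorm_conj]
  have hsymk : ∀ᵐ p ∂μ.prod μ, conj (k p.1 p.2) = k p.2 p.1 := by
    filter_upwards [hsym] with p hp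
    simp only [k, map_mul, Complex.conj_conj, hp]
    ring
  have hKw (x y : X) (hxy : ‖k x y‖ₑ ≠ 0) : w y ≠ 0 ∧ w y ≠ ⊤ := by
    have hy : φ y ≠ 0 := fun h => hxy (by simp [k, h])
    exact ⟨by simpa [w] using Real.rpow_pos_of_pos (norm_pos_iff.2 hy) _, ENNReal.ofReal_ne_top⟩
  have hrow : ∀ᵐ x ∂μ, ∫⁻ y, ‖k x y‖ₑ * w y ∂μ ≤ C * w x := by
    simpa only [hkK] using ae_lintegral_enorm_mul_weight_le (μ := μ) A φ α
  have hcol := ae_lintegral_le_of_ae_symm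
    (by filter_upwards [hsymk] with p hp; rw [← hp, RCLike.enorm_conj]) hrow
  have hkC := isL2BoundedKernel_of_schur hk.enorm (by fun_prop) hKw hrow hcol
  obtain ⟨T, hTnorm, hT⟩ := exists_integralOperator_L2 hk.aestronglyMeasurable hfin hkC
  exact ⟨T, isSelfAdjoint_of_ae_eq_integral_kernel hk.aestronglyMeasurable hfin hkC hsymk hT,
    hTnorm, hT⟩
end
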